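/- arXiv:2507.13831 — 10 statements merged into one kernel-verified Lean document; each statement's English description precedes it below -/
import Mathlib

section
/- If α₁, α₂, α₃ are conjugates (roots of the same minimal polynomial over ℚ) of an algebraic number with α₁ ≠ α₂, then 2α₁ ≠ α₂ + α₃. -/
open Polynomial

/-- If α₁, α₂, α₃ are conjugates (roots of the minimal polynomial over ℚ of an
algebraic number α) with α₁ ≠ α₂, then 2α₁ ≠ α₂ + α₃. -/
theorem stmt_0 (α : ℂ) (hα : IsAlgebraic ℚ α) (a₁ a₂ a₃ : ℂ)
    (h₁ : aeval a₁ (minpoly ℚ α) = 0)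
    (h₂ : aeval a₂ (minpoly ℚ α) = 0)
    (h₃ : aeval a₃ (minpoly ℚ α) = 0)
    (hne : a₁ ≠ a₂) :
    2 * a₁ ≠ a₂ + a₃ := by
  intro heq
  set p := minpoly ℚ α with hp
  have hint : IsIntegral ℚ α := hα.isIntegral
  have hp0 : p ≠ 0 := minpoly.ne_zero hint
  have hirr : Irreducible p := minpoly.irreducible hint
  haveI : Fact ((p.map (algebraMap ℚ ℂ)).Splits) := ⟨IsAlgClosed.splits _⟩
  have m1 : a₁ ∈ p.rootSet ℂ := by rw [mem_rootSet]; exact ⟨hp0, h₁⟩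
  have m2 : a₂ ∈ p.rootSet ℂ := by rw [mem_rootSet]; exact ⟨hp0, h₂⟩
  have m3 : a₃ ∈ p.rootSet ℂ := by rw [mem_rootSet]; exact ⟨hp0, h₃⟩
  -- choose the lex-maximal root m
  classical
  set T : Finset ℂ := (p.aroots ℂ).toFinset with hT
  have hmemT : ∀ z : ℂ, z ∈ T ↔ z ∈ p.rootSet ℂ := fun z => Iff.rfl
  obtain ⟨M, hM, hMmax⟩ := T.exists_max_image (fun z => z.re) ⟨a₁, (hmemT a₁).mpr m1⟩
  set T' : Finset ℂ := T.filter (fun z => z.re = M.re) with hT'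
  obtain ⟨m, hm', hmmax⟩ := T'.exists_max_image (fun z => z.im)
    ⟨M, Finset.mem_filter.mpr ⟨hM, rfl⟩⟩
  obtain ⟨hmT, hmre⟩ := Finset.mem_filter.mp hm'
  have hmem : m ∈ p.rootSet ℂ := (hmemT m).mp hmT
  -- key maximality fact
  have key : ∀ b c : ℂ, b ∈ p.rootSet ℂ → c ∈ p.rootSet ℂ → b + c = 2 * m →
      b = m ∧ c = m := by
    intro b c hb hc hbc
    have hbT : b ∈ T := (hmemT b).mpr hb
    have hcT : c ∈ T := (hmemT c).mpr hc
    have hbre : b.re ≤ M.re := hMmax b hbT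
    have hcre : c.re ≤ M.re := hMmax c hcT
    have hsumre : b.re + c.re = 2 * m.re := by
      have := congrArg Complex.re hbc
      simpa using this
    have hbre' : b.re = M.re := by rw [hmre] at hsumre; linarith
    have hcre' : c.re = M.re := by rw [hmre] at hsumre; linarith
    have hbim : b.im ≤ m.im := hmmax b (Finset.mem_filter.mpr ⟨hbT, hbre'⟩)
    have hcim : c.im ≤ m.im := hmmax c (Finset.mem_filter.mpr ⟨hcT, hcre'⟩)
    have hsumim : b.im + c.im = 2 * m.im := by
      have := congrArg Complex.im hbc
      simpa using this
    constructor <;> apply Complex.ext <;> [skip; skip; skip; skip] <;>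
      first
        | (rw [hbre', ← hmre])
        | (rw [hcre', ← hmre])
        | linarith
  -- transitivity of the Galois action
  haveI := Polynomial.Gal.galAction_isPretransitive p ℂ hirr
  set x₁ : p.rootSet ℂ := ⟨a₁, m1⟩ with hx₁
  set x₂ : p.rootSet ℂ := ⟨a₂, m2⟩ with hx₂
  set x₃ : p.rootSet ℂ := ⟨a₃, m3⟩ with hx₃
  obtain ⟨g, hg⟩ := MulAction.exists_smul_eq p.Gal x₁ (⟨m, hmem⟩ : p.rootSet ℂ)
  -- translate to the splitting field
  set e := Polynomial.Gal.rootsEquivRoots p ℂ with he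
  set i : p.SplittingField →ₐ[ℚ] ℂ := IsScalarTower.toAlgHom ℚ p.SplittingField ℂ with hi
  have hcoe : ∀ y : p.rootSet p.SplittingField, (e y : ℂ) = i y := fun y => rfl
  have hicoe : ∀ (h : p.Gal) (y : p.rootSet p.SplittingField),
      ((h • y : p.rootSet p.SplittingField) : p.SplittingField) = h (y : p.SplittingField) :=
    fun h y => rfl
  set y₁ := e.symm x₁ with hy₁
  set y₂ := e.symm x₂ with hy₂
  set y₃ := e.symm x₃ with hy₃
  have hiy : ∀ (x : p.rootSet ℂ), i ((e.symm x : p.rootSet p.SplittingField) : p.SplittingField)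
      = (x : ℂ) := by
    intro x
    exact (hcoe (e.symm x)).symm.trans (congrArg Subtype.val (e.apply_symm_apply x))
  have hrel : (y₂ : p.SplittingField) + (y₃ : p.SplittingField) = 2 * (y₁ : p.SplittingField) := by
    apply i.injective
    simp only [map_add, map_mul, map_ofNat, hy₁, hy₂, hy₃]
    show i ↑(e.symm x₂) + i ↑(e.symm x₃) = 2 * i ↑(e.symm x₁)
    rw [hiy, hiy, hiy]
    simpa using heq.symm
  -- apply g
  have hrel2 : i (g ((y₂ : p.SplittingField))) + i (g ((y₃ : p.SplittingField)))
      = 2 * i (g ((y₁ : p.SplittingField))) := by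
    rw [← map_add, ← map_add g]
    rw [hrel]
    rw [map_mul, map_mul, map_ofNat, map_ofNat]
  have him : i (g ((y₁ : p.SplittingField))) = m := by
    have := congrArg Subtype.val hg
    rw [Polynomial.Gal.smul_def] at this
    rw [← hy₁] at this
    exact ((congrArg i (hicoe g y₁)).symm.trans (hcoe _).symm).trans this
  have hmem2 : i (g ((y₂ : p.SplittingField))) ∈ p.rootSet ℂ := by
    have := (e ((g • y₂ : p.rootSet p.SplittingField))).2
    convert this using 1; exact ((hcoe _).trans (congrArg i (hicoe g y₂))).symm
  have hmem3 : i (g ((y₃ : p.SplittingField))) ∈ p.rootSet ℂ := by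
    have := (e ((g • y₃ : p.rootSet p.SplittingField))).2
    convert this using 1; exact ((hcoe _).trans (congrArg i (hicoe g y₃))).symm
  rw [him] at hrel2
  obtain ⟨heq2, -⟩ := key _ _ hmem2 hmem3 hrel2
  -- conclude a₂ = a₁
  apply hne
  have : i (g ((y₂ : p.SplittingField))) = i (g ((y₁ : p.SplittingField))) := by
    rw [heq2, him]
  have h21 : (y₂ : p.SplittingField) = (y₁ : p.SplittingField) :=
    g.injective (i.injective this)
  have : y₂ = y₁ := Subtype.ext h21
  have : x₂ = x₁ := by
    rw [hy₂, hy₁] at this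
    exact e.symm.injective this
  exact (congrArg Subtype.val this).symm
end

section
/- Let α be an algebraic number of prime degree d over ℚ with conjugates α₁,…,α_d, and let k₁,…,k_d be integers. If k₁α₁ + k₂α₂ + ⋯ + k_dα_d = 0, then k₁ = k₂ = ⋯ = k_d. -/
open Polynomial

/-- Kurbatov: if α has prime degree d over ℚ with conjugates α₁,…,α_d and
k₁α₁ + ⋯ + k_dα_d = 0 with integers kᵢ, then all kᵢ are equal. -/
theorem stmt_1 (d : ℕ) (hd : d.Prime) (α : ℂ) (hα : IsAlgebraic ℚ α)
    (hdeg : (minpoly ℚ α).natDegree = d)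
    (a : Fin d → ℂ) (hinj : Function.Injective a)
    (hroots : ∀ i, aeval (a i) (minpoly ℚ α) = 0)
    (k : Fin d → ℤ)
    (hsum : ∑ i, (k i : ℂ) * a i = 0) :
    ∀ i j, k i = k j := by
  classical
  haveI : Fact d.Prime := ⟨hd⟩
  set p := minpoly ℚ α with hpdef
  have hint : IsIntegral ℚ α := hα.isIntegral
  have hirr : Irreducible p := minpoly.irreducible hint
  have hp0 : p ≠ 0 := minpoly.ne_zero hint
  have hsep : p.Separable := hirr.separable
  set F := p.SplittingField with hFdef
  have hsplitF : (p.map (algebraMap ℚ F)).Splits := SplittingField.splits p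
  haveI : Algebra.IsAlgebraic ℚ F := Algebra.IsAlgebraic.of_finite ℚ F
  let ι : F →ₐ[ℚ] ℂ := IsAlgClosed.lift
  have hιinj : Function.Injective ι := RingHom.injective (ι : F →+* ℂ)
  -- lift the roots to F
  have himg : ι '' p.rootSet F = p.rootSet ℂ := hsplitF.image_rootSet ι
  have hb : ∀ i, ∃ x, x ∈ p.rootSet F ∧ ι x = a i := by
    intro i
    have hai : a i ∈ p.rootSet ℂ := by
      rw [mem_rootSet]; exact ⟨hp0, hroots i⟩
    rw [← himg] at hai
    obtain ⟨x, hx, hxa⟩ := hai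
    exact ⟨x, hx, hxa⟩
  choose b hbroot hbι using hb
  have hbinj : Function.Injective b := fun i j h => hinj (by rw [← hbι, ← hbι, h])
  -- b is a bijection onto the root set of p in F
  have hcard : Fintype.card (p.rootSet F) = d := by
    rw [card_rootSet_eq_natDegree hsep hsplitF, hdeg]
  have hbbij : Function.Bijective (fun i => (⟨b i, hbroot i⟩ : p.rootSet F)) := by
    have hinj' : Function.Injective (fun i => (⟨b i, hbroot i⟩ : p.rootSet F)) := by
      intro i j h
      exact hbinj (Subtype.mk_eq_mk.mp h)
    have : Fintype.card (Fin d) = Fintype.card (p.rootSet F) := by simp [hcard]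
    exact (Fintype.bijective_iff_injective_and_card _).mpr ⟨hinj', this⟩
  have hbsurj : ∀ x ∈ p.rootSet F, ∃ i, b i = x := by
    intro x hx
    obtain ⟨i, hi⟩ := hbbij.surjective ⟨x, hx⟩
    exact ⟨i, Subtype.mk_eq_mk.mp hi⟩
  -- the relation in F
  have hrel : ∑ i, (k i : F) * b i = 0 := by
    apply hιinj
    rw [map_sum, map_zero]
    rw [← hsum]
    refine Finset.sum_congr rfl fun i _ => ?_
    rw [map_mul, hbι]
    congr 1
    exact map_intCast (ι : F →+* ℂ) (k i)
  -- a Galois automorphism of order d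
  have hdvd : d ∣ Fintype.card (F ≃ₐ[ℚ] F) := by
    have := Gal.prime_degree_dvd_card hirr (hdeg ▸ hd)
    rw [hdeg] at this
    rw [← Nat.card_eq_fintype_card]; exact this
  obtain ⟨σ, hσord⟩ := exists_prime_orderOf_dvd_card d hdvd
  -- σ permutes the b i
  have hσroot : ∀ i, σ (b i) ∈ p.rootSet F := by
    intro i
    rw [mem_rootSet]
    refine ⟨hp0, ?_⟩
    have : aeval (σ (b i)) p = σ (aeval (b i) p) :=
      aeval_algHom_apply (σ : F →ₐ[ℚ] F) (b i) p
    rw [this, (mem_rootSet.mp (hbroot i)).2, map_zero]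
  have hπ : ∀ i, ∃ j, b j = σ (b i) := fun i => hbsurj _ (hσroot i)
  choose πf hπf using hπ
  have hπinj : Function.Injective πf := by
    intro i j h
    apply hbinj
    apply σ.injective
    rw [← hπf, ← hπf, h]
  let π : Equiv.Perm (Fin d) := Equiv.ofBijective πf (Finite.injective_iff_bijective.mp hπinj)
  have hπapp : ∀ i, b (π i) = σ (b i) := hπf
  -- powers
  have hpow : ∀ (n : ℕ) (i : Fin d), (σ ^ n) (b i) = b ((π ^ n) i) := by
    intro n
    induction n with
    | zero => intro i; rw [pow_zero, pow_zero]; rfl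
    | succ n ih =>
      intro i
      rw [pow_succ', pow_succ']
      have : (σ * σ ^ n) (b i) = σ ((σ ^ n) (b i)) := rfl
      rw [this, ih, ← hπapp]
      rfl
  have hσd : σ ^ d = 1 := by rw [← hσord]; exact pow_orderOf_eq_one σ
  have hπd : π ^ d = 1 := by
    apply Equiv.ext
    intro i
    apply hbinj
    rw [← hpow, hσd]
    rfl
  have hπne : π ≠ 1 := by
    intro h
    have hfix : ∀ x ∈ p.rootSet F, (σ : F →ₐ[ℚ] F) x = (AlgHom.id ℚ F) x := by
      intro x hx
      obtain ⟨i, rfl⟩ := hbsurj x hx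
      have := hπapp i
      rw [h] at this
      simpa using this.symm
    have : (σ : F →ₐ[ℚ] F) = AlgHom.id ℚ F :=
      AlgHom.ext_of_adjoin_eq_top (SplittingField.adjoin_rootSet p) hfix
    have hσ1 : σ = 1 := by
      apply AlgEquiv.ext
      intro x
      exact congrArg (fun f => f x) this
    rw [hσ1] at hσord
    simp at hσord
    exact hd.one_lt.ne' hσord.symm
  have hπord : orderOf π = d := orderOf_eq_prime hπd hπne
  -- π is a d-cycle with full support
  have hcyc : π.IsCycle := by
    apply Equiv.Perm.isCycle_of_prime_order'' (by simpa using hd)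
    simp [hπord]
  have hsupp : π.support = Finset.univ := by
    apply Finset.eq_univ_of_card
    rw [← hcyc.orderOf, hπord]
    simp
  have hmove : ∀ i, π i ≠ i := fun i =>
    Equiv.Perm.mem_support.mp (hsupp ▸ Finset.mem_univ i)
  obtain ⟨i₀, hi₀, hall⟩ := hcyc
  -- every root is σ-power of b i₀
  have horbit : ∀ i, ∃ n : ℕ, n < d ∧ (π ^ n) i₀ = i := by
    intro i
    obtain ⟨mz, hmz⟩ := hall (hmove i)
    have hd0 : (0 : ℤ) < (d : ℤ) := by exact_mod_cast hd.pos
    have hnn : 0 ≤ mz % (d : ℤ) := Int.emod_nonneg mz (by exact_mod_cast hd.pos.ne')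
    have h1 : π ^ ((mz % (d : ℤ)).toNat : ℤ) = π ^ mz := by
      rw [Int.toNat_of_nonneg hnn]
      have hcast : ((d : ℕ) : ℤ) = ((orderOf π : ℕ) : ℤ) := by rw [hπord]
      rw [hcast]
      exact zpow_mod_orderOf π mz
    refine ⟨(mz % (d : ℤ)).toNat, ?_, ?_⟩
    · have := Int.emod_lt_of_pos mz hd0
      omega
    · rw [← zpow_natCast π ((mz % (d : ℤ)).toNat), h1]
      exact hmz
  choose m hmlt hm using horbit
  have hminj : ∀ i i', m i = m i' → i = i' := by
    intro i i' h
    rw [← hm i, ← hm i', h]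
  -- the key polynomial
  set γ : F := b i₀ with hγdef
  have hbm : ∀ i, (σ ^ (m i)) γ = b i := by
    intro i
    rw [hγdef, hpow, hm]
  set L : F →ₗ[ℚ] F := σ.toLinearMap with hLdef
  have hLpow : ∀ (n : ℕ) (x : F), (L ^ n) x = (σ ^ n) x := by
    intro n
    induction n with
    | zero => intro x; rfl
    | succ n ih =>
      intro x
      rw [pow_succ, pow_succ]
      have h1 : (L ^ n * L) x = (L ^ n) (L x) := rfl
      have h2 : (σ ^ n * σ) x = (σ ^ n) (σ x) := rfl
      rw [h1, h2, ih]
      rfl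
  set Kp : ℚ[X] := ∑ i, C ((k i : ℚ)) * X ^ (m i) with hKpdef
  have hevX : aeval L ((X : ℚ[X]) ^ d - 1) = 0 := by
    rw [map_sub, map_one, aeval_X_pow]
    apply LinearMap.ext
    intro x
    rw [LinearMap.sub_apply, LinearMap.zero_apply, Module.End.one_apply, hLpow, hσd]
    exact sub_eq_zero_of_eq rfl
  have hevK : aeval L Kp γ = 0 := by
    have : aeval L Kp γ = ∑ i, (k i : ℚ) • ((σ ^ (m i)) γ) := by
      rw [hKpdef, map_sum, LinearMap.sum_apply]
      refine Finset.sum_congr rfl fun i _ => ?_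
      rw [map_mul, aeval_C, aeval_X_pow, Module.End.mul_apply,
        Module.algebraMap_end_apply]
      rw [hLpow (m i) γ]
    rw [this]
    rw [← hrel]
    refine Finset.sum_congr rfl fun i _ => ?_
    rw [hbm i]
    rw [Algebra.smul_def]
    congr 1
  by_cases hdvdK : cyclotomic d ℚ ∣ Kp
  · obtain ⟨q, hq⟩ := hdvdK
    have hΦmonic : (cyclotomic d ℚ).Monic := cyclotomic.monic d ℚ
    have hΦdeg : (cyclotomic d ℚ).natDegree = d - 1 := by
      rw [natDegree_cyclotomic, Nat.totient_prime hd]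
    have hKdeg : Kp.natDegree ≤ d - 1 := by
      apply natDegree_sum_le_of_forall_le
      intro i _
      refine le_trans (natDegree_C_mul_X_pow_le _ _) ?_
      have := hmlt i
      omega
    have hqdeg : q.natDegree = 0 := by
      rcases eq_or_ne q 0 with h0 | h0
      · simp [h0]
      · have hmul := natDegree_mul hΦmonic.ne_zero h0
        rw [← hq] at hmul
        have h2 : 1 ≤ d - 1 := by have := hd.two_le; omega
        omega
    have hqC : q = C (q.coeff 0) := eq_C_of_natDegree_eq_zero hqdeg
    have hcoeff : ∀ i, Kp.coeff (m i) = (k i : ℚ) := by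
      intro i
      rw [hKpdef, finset_sum_coeff, Finset.sum_eq_single i]
      · rw [coeff_C_mul, coeff_X_pow, if_pos rfl, mul_one]
      · intro i' _ hne
        rw [coeff_C_mul, coeff_X_pow, if_neg, mul_zero]
        exact fun h => hne (hminj i i' h).symm
      · intro h; exact absurd (Finset.mem_univ i) h
    have hΦcoeff : ∀ n, n < d → (cyclotomic d ℚ).coeff n = 1 := by
      intro n hn
      rw [cyclotomic_prime ℚ d, finset_sum_coeff, Finset.sum_eq_single n]
      · rw [coeff_X_pow, if_pos rfl]
      · intro t _ hne
        rw [coeff_X_pow, if_neg (fun h => hne h.symm)]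
      · intro h; exact absurd (Finset.mem_range.mpr hn) h
    have hval : ∀ i, (k i : ℚ) = q.coeff 0 := by
      intro i
      rw [← hcoeff i, hq, hqC, coeff_mul_C, hΦcoeff _ (hmlt i), one_mul, coeff_C_zero]
    intro i j
    have : (k i : ℚ) = (k j : ℚ) := by rw [hval i, hval j]
    exact_mod_cast this
  · exfalso
    have hcop : IsCoprime (cyclotomic d ℚ) Kp :=
      (cyclotomic.irreducible_rat hd.pos).coprime_iff_not_dvd.mpr hdvdK
    obtain ⟨u, v, huv⟩ := hcop
    have key : (X : ℚ[X]) - 1 = u * ((X : ℚ[X]) ^ d - 1) + (v * ((X : ℚ[X]) - 1)) * Kp := by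
      have h1 : cyclotomic d ℚ * ((X : ℚ[X]) - 1) = (X : ℚ[X]) ^ d - 1 :=
        cyclotomic_prime_mul_X_sub_one ℚ d
      calc (X : ℚ[X]) - 1 = (u * cyclotomic d ℚ + v * Kp) * ((X : ℚ[X]) - 1) := by
            rw [huv, one_mul]
        _ = u * (cyclotomic d ℚ * ((X : ℚ[X]) - 1)) + (v * ((X : ℚ[X]) - 1)) * Kp := by ring
        _ = _ := by rw [h1]
    have hzero : aeval L ((X : ℚ[X]) - 1) γ = 0 := by
      rw [key, map_add, LinearMap.add_apply, map_mul, map_mul, hevX, mul_zero,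
        LinearMap.zero_apply, Module.End.mul_apply, hevK, map_zero, add_zero]
    rw [map_sub, aeval_X, map_one, LinearMap.sub_apply, Module.End.one_apply,
      sub_eq_zero] at hzero
    have hfixed : b (π i₀) = b i₀ := by
      rw [hπapp]
      exact hzero
    exact hi₀ (hbinj hfixed)
end

section
/- If α and β are algebraic numbers over ℚ of coprime degrees m and n, then ℚ(α, β) = ℚ(α + β). -/
open Polynomial IntermediateField

private lemma lex_unique_aux {a b a' b' : ℂ} (hsum : a + b = a' + b')
    (h1 : a.re ≤ a'.re) (h2 : b.re ≤ b'.re)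
    (h3 : a.re = a'.re → a.im ≤ a'.im) (h4 : b.re = b'.re → b.im ≤ b'.im) :
    a = a' ∧ b = b' := by
  have hre : a.re + b.re = a'.re + b'.re := by
    have := congrArg Complex.re hsum; simpa using this
  have ha_re : a.re = a'.re := by linarith
  have hb_re : b.re = b'.re := by linarith
  have him : a.im + b.im = a'.im + b'.im := by
    have := congrArg Complex.im hsum; simpa using this
  have h3' := h3 ha_re
  have h4' := h4 hb_re
  have ha_im : a.im = a'.im := by linarith
  have hb_im : b.im = b'.im := by linarith
  exact ⟨Complex.ext ha_re ha_im, Complex.ext hb_re hb_im⟩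

private lemma exists_lex_max_aux (s : Finset ℂ) (hs : s.Nonempty) :
    ∃ a ∈ s, (∀ x ∈ s, x.re ≤ a.re) ∧ (∀ x ∈ s, x.re = a.re → x.im ≤ a.im) := by
  obtain ⟨c, hc, hcmax⟩ := s.exists_max_image Complex.re hs
  obtain ⟨a, ha, hamax⟩ := (s.filter (fun z => z.re = c.re)).exists_max_image Complex.im
    ⟨c, by simp [hc]⟩
  have hafil := Finset.mem_filter.mp ha
  refine ⟨a, hafil.1, fun x hx => hafil.2 ▸ hcmax x hx, fun x hx hxre => ?_⟩
  exact hamax x (Finset.mem_filter.mpr ⟨hx, by rw [hxre, hafil.2]⟩)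

set_option synthInstance.maxHeartbeats 1000000 in
set_option maxHeartbeats 4000000 in
/-- If α and β are algebraic over ℚ of coprime degrees, then
ℚ(α, β) = ℚ(α + β). -/
theorem stmt_4 (α β : ℂ) (hα : IsAlgebraic ℚ α) (hβ : IsAlgebraic ℚ β)
    (hcop : Nat.Coprime (minpoly ℚ α).natDegree (minpoly ℚ β).natDegree) :
    IntermediateField.adjoin ℚ {α, β} = IntermediateField.adjoin ℚ {α + β} := by
  classical
  have hαi : IsIntegral ℚ α := hα.isIntegral
  have hβi : IsIntegral ℚ β := hβ.isIntegral
  set p := minpoly ℚ α with hp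
  set q := minpoly ℚ β with hq
  set m := p.natDegree with hm_def
  set n := q.natDegree with hn_def
  have hm : 0 < m := minpoly.natDegree_pos hαi
  have hn : 0 < n := minpoly.natDegree_pos hβi
  set L := IntermediateField.adjoin ℚ ({α, β} : Set ℂ) with hL
  have hαmem : α ∈ L := IntermediateField.subset_adjoin ℚ _ (by left; rfl)
  have hβmem : β ∈ L := IntermediateField.subset_adjoin ℚ _ (by right; rfl)
  haveI : Finite ↥({α, β} : Set ℂ) := Set.Finite.to_subtype ((Set.finite_singleton β).insert α)
  haveI hLfin : FiniteDimensional ℚ ↥L := IntermediateField.finiteDimensional_adjoin (by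
    intro x hx
    rcases hx with rfl | hx
    · exact hαi
    · rcases hx with rfl
      exact hβi)
  -- tower computation of the rank
  haveI := IntermediateField.adjoin.finiteDimensional hαi
  have hβiα : IsIntegral ℚ⟮α⟯ β := hβi.tower_top
  haveI := IntermediateField.adjoin.finiteDimensional hβiα
  have htower : Module.finrank ℚ ↥L =
      Module.finrank ℚ ↥(ℚ⟮α⟯) * Module.finrank ↥(ℚ⟮α⟯) ↥(ℚ⟮α⟯⟮β⟯) := by
    have h1 : (IntermediateField.adjoin ℚ⟮α⟯ ({β} : Set ℂ)).restrictScalars ℚ = L := by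
      rw [hL, ← Set.singleton_union]
      exact IntermediateField.adjoin_adjoin_left ℚ {α} {β}
    rw [← h1]
    exact (Module.finrank_mul_finrank ℚ ℚ⟮α⟯ ℚ⟮α⟯⟮β⟯).symm
  have he_le : Module.finrank ↥(ℚ⟮α⟯) ↥(ℚ⟮α⟯⟮β⟯) ≤ n := by
    rw [IntermediateField.adjoin.finrank hβiα]
    have hdvd := minpoly.dvd_map_of_isScalarTower ℚ ℚ⟮α⟯ β
    have := Polynomial.natDegree_le_of_dvd hdvd
      (Polynomial.map_ne_zero (minpoly.ne_zero hβi))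
    rwa [Polynomial.natDegree_map] at this
  have hβLi : IsIntegral ℚ ((⟨β, hβmem⟩ : ↥L)) := Algebra.IsIntegral.isIntegral _
  have hdvd_n : n ∣ Module.finrank ℚ ↥L := by
    have := minpoly.degree_dvd hβLi
    rwa [show minpoly ℚ ((⟨β, hβmem⟩ : ↥L)) = q from IntermediateField.minpoly_eq _] at this
  have he_eq : Module.finrank ↥(ℚ⟮α⟯) ↥(ℚ⟮α⟯⟮β⟯) = n := by
    have hma : Module.finrank ℚ ↥(ℚ⟮α⟯) = m := IntermediateField.adjoin.finrank hαi
    have hdvd' : n ∣ m * Module.finrank ↥(ℚ⟮α⟯) ↥(ℚ⟮α⟯⟮β⟯) := by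
      rw [← hma, ← htower]; exact hdvd_n
    have := (Nat.Coprime.dvd_of_dvd_mul_left hcop.symm) hdvd'
    exact le_antisymm he_le (Nat.le_of_dvd (by
      have : 0 < Module.finrank ↥(ℚ⟮α⟯) ↥(ℚ⟮α⟯⟮β⟯) := Module.finrank_pos
      exact this) this)
  have hrank : Module.finrank ℚ ↥L = m * n := by
    rw [htower, he_eq, IntermediateField.adjoin.finrank hαi]
  -- separability / counting of embeddings
  haveI : CharZero ↥L := (RingHom.charZero_iff (algebraMap ↥L ℂ).injective).mpr inferInstance
  have hpsep : p.Separable := (minpoly.irreducible hαi).separable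
  have hqsep : q.Separable := (minpoly.irreducible hβi).separable
  have hcardL : Fintype.card (↥L →ₐ[ℚ] ℂ) = m * n := by
    rw [AlgHom.card, hrank]
  have hcardp : Fintype.card (p.rootSet ℂ) = m :=
    Polynomial.card_rootSet_eq_natDegree hpsep (IsAlgClosed.splits (p.map (algebraMap ℚ ℂ)))
  have hcardq : Fintype.card (q.rootSet ℂ) = n :=
    Polynomial.card_rootSet_eq_natDegree hqsep (IsAlgClosed.splits (q.map (algebraMap ℚ ℂ)))
  have haevalαL : (Polynomial.aeval ((⟨α, hαmem⟩ : ↥L))) p = 0 := by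
    rw [show p = minpoly ℚ ((⟨α, hαmem⟩ : ↥L)) from (IntermediateField.minpoly_eq (⟨α, hαmem⟩ : ↥L)).symm]
    exact minpoly.aeval _ _
  have haevalβL : (Polynomial.aeval ((⟨β, hβmem⟩ : ↥L))) q = 0 := by
    rw [show q = minpoly ℚ ((⟨β, hβmem⟩ : ↥L)) from (IntermediateField.minpoly_eq (⟨β, hβmem⟩ : ↥L)).symm]
    exact minpoly.aeval _ _
  set Φ : (↥L →ₐ[ℚ] ℂ) → (p.rootSet ℂ) × (q.rootSet ℂ) := fun σ =>
    (⟨σ ⟨α, hαmem⟩, by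
        rw [Polynomial.mem_rootSet]
        exact ⟨minpoly.ne_zero hαi, by rw [Polynomial.aeval_algHom_apply, haevalαL, map_zero]⟩⟩,
     ⟨σ ⟨β, hβmem⟩, by
        rw [Polynomial.mem_rootSet]
        exact ⟨minpoly.ne_zero hβi, by rw [Polynomial.aeval_algHom_apply, haevalβL, map_zero]⟩⟩) with hΦ
  have hΦinj : Function.Injective Φ := by
    intro σ τ h
    have h1 : σ ⟨α, hαmem⟩ = τ ⟨α, hαmem⟩ := congrArg (fun z => (z.1 : ℂ)) h
    have h2 : σ ⟨β, hβmem⟩ = τ ⟨β, hβmem⟩ := congrArg (fun z => (z.2 : ℂ)) h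
    apply IntermediateField.algHom_ext_of_eq_adjoin ℚ hL
    intro x hx
    rcases hx with rfl | hx
    · exact h1
    · rcases hx with rfl
      exact h2
  have hΦbij : Function.Bijective Φ := by
    rw [Fintype.bijective_iff_injective_and_card]
    exact ⟨hΦinj, by rw [hcardL, Fintype.card_prod, hcardp, hcardq]⟩
  -- lexicographically maximal roots
  have hαroot : α ∈ p.rootSet ℂ := by
    rw [Polynomial.mem_rootSet]; exact ⟨minpoly.ne_zero hαi, minpoly.aeval ℚ α⟩
  have hβroot : β ∈ q.rootSet ℂ := by
    rw [Polynomial.mem_rootSet]; exact ⟨minpoly.ne_zero hβi, minpoly.aeval ℚ β⟩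
  obtain ⟨a', ha'A, ha're, ha'im⟩ := exists_lex_max_aux (p.rootSet ℂ).toFinset
    ⟨α, Set.mem_toFinset.mpr hαroot⟩
  obtain ⟨b', hb'B, hb're, hb'im⟩ := exists_lex_max_aux (q.rootSet ℂ).toFinset
    ⟨β, Set.mem_toFinset.mpr hβroot⟩
  rw [Set.mem_toFinset] at ha'A hb'B
  -- the embedding sending α to a' and β to b'
  obtain ⟨σ, hσ⟩ := hΦbij.2 (⟨a', ha'A⟩, ⟨b', hb'B⟩)
  have hσα : σ ⟨α, hαmem⟩ = a' := congrArg (fun z => (z.1 : ℂ)) hσ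
  have hσβ : σ ⟨β, hβmem⟩ = b' := congrArg (fun z => (z.2 : ℂ)) hσ
  -- the minimal polynomial of a' over ℚ(v) where v = a' + b'
  set v : ℂ := a' + b' with hv
  have ha'i : IsIntegral ℚ a' :=
    (IsAlgebraic.isIntegral ⟨p, minpoly.ne_zero hαi, (Polynomial.mem_rootSet.mp ha'A).2⟩)
  have hb'i : IsIntegral ℚ b' :=
    (IsAlgebraic.isIntegral ⟨q, minpoly.ne_zero hβi, (Polynomial.mem_rootSet.mp hb'B).2⟩)
  have hvi : IsIntegral ℚ v := ha'i.add hb'i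
  haveI := IntermediateField.adjoin.finiteDimensional hvi
  haveI : CharZero ↥(ℚ⟮v⟯) :=
    (RingHom.charZero_iff (algebraMap ↥(ℚ⟮v⟯) ℂ).injective).mpr inferInstance
  have ha'K : IsIntegral ↥(ℚ⟮v⟯) a' := ha'i.tower_top
  set g := minpoly ↥(ℚ⟮v⟯) a' with hg
  have hgsep : g.Separable := (minpoly.irreducible ha'K).separable
  have hgen : (algebraMap ↥(ℚ⟮v⟯) ℂ) (IntermediateField.AdjoinSimple.gen ℚ v) = v :=
    IntermediateField.AdjoinSimple.algebraMap_gen ℚ v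
  have hdvd1 : g ∣ p.map (algebraMap ℚ ↥(ℚ⟮v⟯)) := by
    rw [hg]
    exact minpoly.dvd (A := ↥(ℚ⟮v⟯)) (x := a') (by
      rw [Polynomial.aeval_map_algebraMap]
      exact (Polynomial.mem_rootSet.mp ha'A).2)
  have hdvd2 : g ∣ (q.map (algebraMap ℚ ↥(ℚ⟮v⟯))).comp
      (Polynomial.C (IntermediateField.AdjoinSimple.gen ℚ v) - Polynomial.X) := by
    rw [hg]
    exact minpoly.dvd (A := ↥(ℚ⟮v⟯)) (x := a') (by
      rw [Polynomial.aeval_comp, map_sub, Polynomial.aeval_C, Polynomial.aeval_X, hgen,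
        Polynomial.aeval_map_algebraMap]
      have hvb : v - a' = b' := by rw [hv]; ring
      rw [hvb]
      exact (Polynomial.mem_rootSet.mp hb'B).2)
  -- g has a unique root, hence degree one
  have hroot_unique : ∀ x ∈ g.rootSet ℂ, x = a' := by
    intro x hx
    have hx0 : (Polynomial.aeval x) g = 0 := (Polynomial.mem_rootSet.mp hx).2
    have hxp : (Polynomial.aeval x) p = 0 := by
      obtain ⟨c, hc⟩ := hdvd1
      have h0 : (Polynomial.aeval x) (p.map (algebraMap ℚ ↥(ℚ⟮v⟯))) = 0 := by
        rw [hc, map_mul, hx0, zero_mul]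
      rwa [Polynomial.aeval_map_algebraMap] at h0
    have hxq : (Polynomial.aeval (v - x)) q = 0 := by
      obtain ⟨c, hc⟩ := hdvd2
      have h0 : (Polynomial.aeval x) ((q.map (algebraMap ℚ ↥(ℚ⟮v⟯))).comp
          (Polynomial.C (IntermediateField.AdjoinSimple.gen ℚ v) - Polynomial.X)) = 0 := by
        rw [hc, map_mul, hx0, zero_mul]
      rwa [Polynomial.aeval_comp, map_sub, Polynomial.aeval_C, Polynomial.aeval_X, hgen,
        Polynomial.aeval_map_algebraMap] at h0
    have hxA : x ∈ (p.rootSet ℂ).toFinset := Set.mem_toFinset.mpr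
      (Polynomial.mem_rootSet.mpr ⟨minpoly.ne_zero hαi, hxp⟩)
    have hxB : v - x ∈ (q.rootSet ℂ).toFinset := Set.mem_toFinset.mpr
      (Polynomial.mem_rootSet.mpr ⟨minpoly.ne_zero hβi, hxq⟩)
    have hkey := lex_unique_aux (a := x) (b := v - x) (a' := a') (b' := b')
      (by rw [hv]; ring) (ha're x hxA) (hb're _ hxB) (ha'im x hxA) (hb'im _ hxB)
    exact hkey.1
  have ha'g : a' ∈ g.rootSet ℂ := by
    rw [Polynomial.mem_rootSet]
    exact ⟨minpoly.ne_zero ha'K, minpoly.aeval _ _⟩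
  have hcard1 : Fintype.card (g.rootSet ℂ) = 1 := by
    rw [Fintype.card_eq_one_iff]
    exact ⟨⟨a', ha'g⟩, fun y => Subtype.ext (hroot_unique _ y.2)⟩
  have hdeg1 : g.natDegree = 1 := by
    rw [← Polynomial.card_rootSet_eq_natDegree hgsep (IsAlgClosed.splits (g.map (algebraMap ↥(ℚ⟮v⟯) ℂ))), hcard1]
  have ha'mem : a' ∈ ℚ⟮v⟯ := by
    obtain ⟨y, hy⟩ := minpoly.natDegree_eq_one_iff.mp hdeg1
    rw [← hy]
    exact y.2
  -- transport back along σ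
  set sL : ↥L := ⟨α, hαmem⟩ + ⟨β, hβmem⟩ with hsL
  have hσs : σ sL = v := by rw [hsL, map_add, hσα, hσβ]
  have hmapT : (IntermediateField.adjoin ℚ ({sL} : Set ↥L)).map σ = ℚ⟮v⟯ := by
    rw [IntermediateField.adjoin_map, Set.image_singleton, hσs]
  have hαT : (⟨α, hαmem⟩ : ↥L) ∈ IntermediateField.adjoin ℚ ({sL} : Set ↥L) := by
    have hmem : a' ∈ (IntermediateField.adjoin ℚ ({sL} : Set ↥L)).map σ := by
      rw [hmapT]; exact ha'mem
    obtain ⟨y, hyT, hy⟩ := hmem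
    have hinj : Function.Injective σ := σ.toRingHom.injective
    have : y = (⟨α, hαmem⟩ : ↥L) := hinj (hy.trans hσα.symm)
    rwa [← this]
  have hmapval : (IntermediateField.adjoin ℚ ({sL} : Set ↥L)).map L.val
      = IntermediateField.adjoin ℚ ({α + β} : Set ℂ) := by
    refine (IntermediateField.adjoin_map ℚ {sL} L.val).trans ?_
    rw [Set.image_singleton]
    rfl
  have hαE : α ∈ IntermediateField.adjoin ℚ ({α + β} : Set ℂ) := by
    rw [← hmapval]
    exact ⟨⟨α, hαmem⟩, hαT, rfl⟩
  have hsE : α + β ∈ IntermediateField.adjoin ℚ ({α + β} : Set ℂ) :=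
    IntermediateField.subset_adjoin ℚ _ rfl
  apply le_antisymm
  · rw [IntermediateField.adjoin_le_iff]
    intro x hx
    rcases hx with rfl | hx
    · exact hαE
    · rcases hx with rfl
      have := (IntermediateField.adjoin ℚ ({α + x} : Set ℂ)).sub_mem hsE hαE
      simpa using this
  · rw [IntermediateField.adjoin_le_iff]
    intro x hx
    rcases hx with rfl
    exact L.add_mem hαmem hβmem
end

section
/- If α is an algebraic number of degree 5 or 7 over ℚ, then no four distinct conjugates of α satisfy α₁ + α₂ + α₃ + α₄ = 0. -/
open Polynomial

private lemma aux_no_four (p : ℕ) (hp : p.Prime) (hp4 : 4 < p) (f : ℚ[X])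
    (hirr : Irreducible f) (hdegf : f.natDegree = p) (a : Fin 4 → ℂ)
    (hainj : Function.Injective a) (haroot : ∀ i, aeval (a i) f = 0)
    (hasum : a 0 + a 1 + a 2 + a 3 = 0) : False := by
  classical
  haveI : Fact p.Prime := ⟨hp⟩
  have hfne : f ≠ 0 := hirr.ne_zero
  set L := f.SplittingField with hL
  have hsplitL : (f.map (algebraMap ℚ L)).Splits := SplittingField.splits f
  haveI : IsSplittingField ℚ L f := IsSplittingField.splittingField f
  let ι : L →ₐ[ℚ] ℂ := IsSplittingField.lift L f (IsAlgClosed.splits (f.map (algebraMap ℚ ℂ)))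
  have hmapmap : f.map (algebraMap ℚ ℂ) = (f.map (algebraMap ℚ L)).map (ι : L →+* ℂ) := by
    rw [Polynomial.map_map, ι.comp_algebraMap]
  have hrootsmap : (f.map (algebraMap ℚ ℂ)).roots
      = (f.map (algebraMap ℚ L)).roots.map (ι : L →+* ℂ) := by
    rw [hmapmap, hsplitL.roots_map]
  -- lift the a i to roots b i in L
  have hb : ∀ i, ∃ b : L, b ∈ f.aroots L ∧ ι b = a i := by
    intro i
    have hmem : a i ∈ (f.map (algebraMap ℚ ℂ)).roots := by
      rw [mem_roots_map_of_injective (algebraMap ℚ ℂ).injective hfne]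
      simpa [aeval_def] using haroot i
    rw [hrootsmap] at hmem
    obtain ⟨b, hb1, hb2⟩ := Multiset.mem_map.mp hmem
    exact ⟨b, hb1, hb2⟩
  choose b hbroot hbι using hb
  have hbinj : Function.Injective b := fun i j hij => hainj (by rw [← hbι, ← hbι, hij])
  have hbsum : b 0 + b 1 + b 2 + b 3 = 0 := by
    have : ι (b 0 + b 1 + b 2 + b 3) = ι 0 := by
      simp only [map_add, map_zero, hbι]; exact hasum
    exact ι.injective this
  -- Galois group element of order p
  have hdvd : p ∣ Fintype.card f.Gal := by
    rw [← Nat.card_eq_fintype_card]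
    exact hdegf ▸ Polynomial.Gal.prime_degree_dvd_card hirr (hdegf ▸ hp)
  obtain ⟨σ, hσ⟩ := exists_prime_orderOf_dvd_card p hdvd
  have hσp : σ ^ p = 1 := by rw [← hσ]; exact pow_orderOf_eq_one σ
  have hGmul : ∀ (τ₁ τ₂ : f.Gal) (x : L), (τ₁ * τ₂) x = τ₁ (τ₂ x) := fun _ _ _ => rfl
  have hGone : ∀ x : L, (1 : f.Gal) x = x := fun _ => rfl
  -- basic facts about roots in L
  have hsep : f.Separable := hirr.separable
  have hnodup : (f.aroots L).Nodup := nodup_roots (hsep.map)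
  have hcard : (f.aroots L).card = p := by
    rw [aroots_def, (splits_iff_card_roots).mp hsplitL,
      natDegree_map, hdegf]
  have hσ1 : ∀ (τ : f.Gal), ∀ x ∈ f.aroots L, τ x ∈ f.aroots L := by
    intro τ x hx
    rw [mem_aroots] at hx ⊢
    refine ⟨hx.1, ?_⟩
    have h := Polynomial.aeval_algHom_apply (AlgEquiv.toAlgHom τ) x f
    rw [hx.2, map_zero] at h
    exact h
  have hσroot : ∀ x ∈ f.aroots L, (∀ n : ℕ, (σ ^ n) x ∈ f.aroots L) := by
    intro x hx n
    induction n with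
    | zero => exact hx
    | succ n ih => rw [pow_succ, hGmul]; exact hσ1 _ _ (hσ1 _ _ hx)

  -- there is a root not fixed by σ
  have hfree : ∃ y ∈ f.aroots L, σ y ≠ y := by
    by_contra hcon
    push_neg at hcon
    have hone : σ = 1 := by
      apply Polynomial.Gal.ext
      intro x hx
      have hx' : x ∈ f.aroots L := by
        rw [mem_rootSet] at hx
        rw [mem_aroots]; exact hx
      rw [hGone]
      exact hcon x hx'
    rw [hone, orderOf_one] at hσ
    exact hp.ne_one hσ.symm
  obtain ⟨y, hyroot, hyfree⟩ := hfree
  -- no power σ^n with 0 < n < p fixes y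
  have hkey : ∀ n : ℕ, 0 < n → n < p → (σ ^ n) y ≠ y := by
    intro n hn0 hnp hfix
    have hcop : Nat.Coprime n p :=
      Nat.Coprime.symm ((Nat.Prime.coprime_iff_not_dvd hp).mpr
        (fun h => absurd (Nat.le_of_dvd hn0 h) (not_le.mpr hnp)))
    obtain ⟨m, -, hm⟩ := Nat.exists_mul_mod_eq_one_of_coprime hcop hp.one_lt
    have hfixm : ∀ t : ℕ, (σ ^ (n * t)) y = y := by
      intro t
      induction t with
      | zero => exact hGone y
      | succ t ih => rw [Nat.mul_succ, pow_add, hGmul, hfix, ih]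
    have h1 : n * m = p * (n * m / p) + 1 := by
      conv_lhs => rw [← Nat.div_add_mod (n * m) p]
      rw [hm]
    have h2 : σ ^ (n * m) = σ := by
      rw [h1, pow_add, pow_mul, hσp, one_pow, one_mul, pow_one]
    exact hyfree (by rw [← h2, hfixm m])
  -- the orbit map on Fin p is injective
  have hginj : Function.Injective (fun k : Fin p => (σ ^ (k : ℕ)) y) := by
    have haux : ∀ k l : Fin p, (k : ℕ) < (l : ℕ) →
        (σ ^ (k : ℕ)) y = (σ ^ (l : ℕ)) y → False := by
      intro k l h hkl
      apply hkey ((l : ℕ) - (k : ℕ)) (by omega) (by have := l.isLt; omega)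
      apply EquivLike.injective (σ ^ (k : ℕ))
      rw [← hGmul, ← pow_add, Nat.add_sub_cancel' (le_of_lt h)]
      exact hkl.symm
    intro k l hkl
    simp only at hkl
    rcases lt_trichotomy (k : ℕ) (l : ℕ) with h | h | h
    · exact absurd (haux k l h hkl) (by simp)
    · exact Fin.ext h
    · exact absurd (haux l k h hkl.symm) (by simp)
  -- the orbit covers all roots
  have himg : Finset.image (fun k : Fin p => (σ ^ (k : ℕ)) y) Finset.univ
      = (f.aroots L).toFinset := by
    apply Finset.eq_of_subset_of_card_le
    · intro x hx
      obtain ⟨k, _, rfl⟩ := Finset.mem_image.mp hx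
      exact Multiset.mem_toFinset.mpr (hσroot y hyroot k)
    · rw [Multiset.toFinset_card_of_nodup hnodup, hcard,
        Finset.card_image_of_injective _ hginj, Finset.card_univ, Fintype.card_fin]
  have hcex : ∀ i, ∃ k : Fin p, (σ ^ (k : ℕ)) y = b i := by
    intro i
    have hmem : b i ∈ (f.aroots L).toFinset := Multiset.mem_toFinset.mpr (hbroot i)
    rw [← himg] at hmem
    obtain ⟨k, _, hk⟩ := Finset.mem_image.mp hmem
    exact ⟨k, hk⟩
  choose c hc using hcex
  have hcinj : Function.Injective c := by
    intro i j hij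
    exact hbinj (by rw [← hc, ← hc, hij])
  have hmiss : ∃ k₀ : Fin p, ∀ i, c i ≠ k₀ := by
    by_contra hcon
    push_neg at hcon
    have hsurj : Function.Surjective c := fun k => hcon k
    have hle := Fintype.card_le_of_surjective c hsurj
    simp only [Fintype.card_fin] at hle
    omega
  obtain ⟨k₀, hk₀⟩ := hmiss
  -- the relation polynomial
  set P : ℚ[X] := ∑ i : Fin 4, X ^ ((c i : ℕ)) with hPdef
  have hPcoeff : ∀ k : Fin p, P.coeff (k : ℕ) = ∑ i : Fin 4, if c i = k then 1 else 0 := by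
    intro k
    rw [hPdef, finset_sum_coeff]
    refine Finset.sum_congr rfl fun i _ => ?_
    rw [coeff_X_pow]
    simp [Fin.val_eq_val, eq_comm]
  have hP1 : P.coeff ((c 0 : Fin p) : ℕ) = 1 := by
    rw [hPcoeff (c 0),
      Finset.sum_eq_single 0 (fun i _ hi => if_neg (fun h => hi (hcinj h)))
        (fun h => absurd (Finset.mem_univ 0) h)]
    simp
  have hP0 : P.coeff ((k₀ : Fin p) : ℕ) = 0 := by
    rw [hPcoeff k₀]
    exact Finset.sum_eq_zero fun i _ => if_neg (hk₀ i)
  have hPeval : P.eval 1 = 4 := by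
    rw [hPdef, eval_finset_sum]
    norm_num
  have hPne : P ≠ 0 := fun h => by simp [h] at hPeval
  have hPdeg : P.natDegree ≤ p - 1 := by
    rw [hPdef]
    apply natDegree_sum_le_of_forall_le
    intro i _
    rw [natDegree_X_pow]
    have := (c i).isLt
    omega
  have hPhi : ¬ cyclotomic p ℚ ∣ P := by
    rintro ⟨q, hq⟩
    have hq0 : q ≠ 0 := fun h => hPne (by rw [hq, h, mul_zero])
    have hdq : q.natDegree = 0 := by
      have hmul := natDegree_mul (cyclotomic_ne_zero p ℚ) hq0
      rw [← hq, natDegree_cyclotomic, Nat.totient_prime hp] at hmul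
      omega
    obtain ⟨r, hr⟩ := natDegree_eq_zero.mp hdq
    have hΦcoeff : ∀ k : ℕ, k < p → (cyclotomic p ℚ).coeff k = 1 := by
      intro k hk
      rw [cyclotomic_prime, finset_sum_coeff,
        Finset.sum_eq_single k (fun i _ hik => by rw [coeff_X_pow]; exact if_neg (Ne.symm hik))
          (fun h => absurd (Finset.mem_range.mpr hk) h)]
      simp [coeff_X_pow]
    have h1 : P.coeff ((c 0 : Fin p) : ℕ) = r := by
      rw [hq, ← hr, coeff_mul_C, hΦcoeff _ (c 0).isLt, one_mul]
    have h0 : P.coeff ((k₀ : Fin p) : ℕ) = r := by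
      rw [hq, ← hr, coeff_mul_C, hΦcoeff _ k₀.isLt, one_mul]
    rw [hP1] at h1
    rw [hP0] at h0
    rw [← h1] at h0
    norm_num at h0
  have hX1 : ¬ (X - C (1 : ℚ)) ∣ P := by
    rw [dvd_iff_isRoot]
    intro h
    rw [IsRoot.def, hPeval] at h
    norm_num at h
  have hcop : IsCoprime (X ^ p - 1 : ℚ[X]) P := by
    have hfac : (X ^ p - 1 : ℚ[X]) = (X - C 1) * cyclotomic p ℚ := by
      rw [← prod_cyclotomic_eq_X_pow_sub_one hp.pos ℚ, Nat.Prime.divisors hp,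
        Finset.prod_pair hp.one_lt.ne, cyclotomic_one, C_1]
    rw [hfac]
    exact ((irreducible_X_sub_C (1 : ℚ)).coprime_iff_not_dvd.mpr hX1).mul_left
      ((cyclotomic.irreducible_rat hp.pos).coprime_iff_not_dvd.mpr hPhi)
  -- evaluate the Bezout identity at σ as an endomorphism
  set M : Module.End ℚ L := σ.toLinearMap with hMdef
  have hMpow : ∀ (n : ℕ) (x : L), (M ^ n) x = (σ ^ n) x := by
    intro n
    induction n with
    | zero => intro x; rw [pow_zero, pow_zero, Module.End.one_apply, hGone]
    | succ n ih =>
      intro x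
      rw [pow_succ, pow_succ, Module.End.mul_apply, hGmul, ← ih]
      rfl
  obtain ⟨u, v, huv⟩ := hcop
  have e1 : (aeval M (X ^ p - 1 : ℚ[X])) y = 0 := by
    rw [map_sub, aeval_X_pow, map_one, LinearMap.sub_apply, Module.End.one_apply,
      hMpow, hσp, hGone, sub_self]
  have e2 : (aeval M P) y = 0 := by
    rw [hPdef, map_sum]
    rw [LinearMap.coe_sum, Finset.sum_apply]
    have : ∀ i : Fin 4, (aeval M (X ^ ((c i : ℕ)) : ℚ[X])) y = b i := by
      intro i
      rw [aeval_X_pow, hMpow, hc]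
    rw [Finset.sum_congr rfl (fun i _ => this i), Fin.sum_univ_four, hbsum]
  have hy0 : y = 0 := by
    calc y = (aeval M (1 : ℚ[X])) y := by simp
      _ = (aeval M (u * (X ^ p - 1) + v * P)) y := by rw [huv]
      _ = 0 := by
          rw [map_add, map_mul, map_mul, LinearMap.add_apply, Module.End.mul_apply,
            Module.End.mul_apply, e1, e2, map_zero, map_zero, add_zero]
  exact hyfree (by rw [hy0, map_zero])


/-- If α has degree 5 or 7 over ℚ, then no four distinct conjugates of α
satisfy α₁ + α₂ + α₃ + α₄ = 0. -/
theorem stmt_6 (α : ℂ) (hα : IsAlgebraic ℚ α)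
    (hdeg : (minpoly ℚ α).natDegree = 5 ∨ (minpoly ℚ α).natDegree = 7) :
    ¬ ∃ a : Fin 4 → ℂ, Function.Injective a ∧
      (∀ i, aeval (a i) (minpoly ℚ α) = 0) ∧
      a 0 + a 1 + a 2 + a 3 = 0 := by
  rintro ⟨a, hinj, hroot, hsum⟩
  have hint : IsIntegral ℚ α := hα.isIntegral
  have hirr : Irreducible (minpoly ℚ α) := minpoly.irreducible hint
  rcases hdeg with h | h
  · exact aux_no_four 5 (by norm_num) (by norm_num) _ hirr h a hinj hroot hsum
  · exact aux_no_four 7 (by norm_num) (by norm_num) _ hirr h a hinj hroot hsum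
end

section
/- Let α be an algebraic number of degree 6 over ℚ. If four distinct conjugates of α satisfy α₁ + α₂ + α₃ + α₄ = 0, then the minimal polynomial of α is an even polynomial, i.e., of the form x⁶ + a x⁴ + b x² + c with a, b, c ∈ ℚ. -/
open Polynomial

lemma coeff_comp_neg_X (p : ℚ[X]) (n : ℕ) :
    (p.comp (-X)).coeff n = (-1) ^ n * p.coeff n := by
  induction p using Polynomial.induction_on' with
  | add p q hp hq => simp [add_comp, hp, hq, mul_add]
  | monomial k c =>
    have hx : (-X : ℚ[X]) ^ k = C ((-1 : ℚ) ^ k) * X ^ k := by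
      rw [neg_pow, C_pow, C_neg, C_1]
    rw [monomial_comp, hx, ← mul_assoc, ← C_mul, coeff_C_mul, coeff_X_pow, coeff_monomial]
    split_ifs with h1 h2 h2
    · subst h1; ring
    · exact absurd h1.symm h2
    · exact absurd h2.symm h1
    · ring

/-- If α has degree 6 over ℚ and four distinct conjugates of α sum to zero,
then the minimal polynomial of α is even: x⁶ + a x⁴ + b x² + c. -/
theorem stmt_7 (α : ℂ) (hα : IsAlgebraic ℚ α)
    (hdeg : (minpoly ℚ α).natDegree = 6)
    (a : Fin 4 → ℂ) (hinj : Function.Injective a)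
    (hroots : ∀ i, aeval (a i) (minpoly ℚ α) = 0)
    (hsum : a 0 + a 1 + a 2 + a 3 = 0) :
    ∃ p q r : ℚ, minpoly ℚ α = X ^ 6 + C p * X ^ 4 + C q * X ^ 2 + C r := by
  have hint : IsIntegral ℚ α := hα.isIntegral
  set f := minpoly ℚ α with hfdef
  have hf0 : f ≠ 0 := minpoly.ne_zero hint
  have hmon : f.Monic := minpoly.monic hint
  have hirr : Irreducible f := minpoly.irreducible hint
  set φ := algebraMap ℚ ℂ with hφdef
  set F := f.map φ with hFdef
  have hF0 : F ≠ 0 := by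
    simpa [hFdef] using (Polynomial.map_ne_zero hf0 : f.map φ ≠ 0)
  have hFdeg : F.natDegree = 6 := by rw [hFdef, natDegree_map]; exact hdeg
  have hFmon : F.Monic := hmon.map φ
  have hsplits : F.Splits := IsAlgClosed.splits F
  have hcard6 : Multiset.card F.roots = 6 := by
    rw [splits_iff_card_roots.1 hsplits, hFdeg]
  have hsep : F.Separable := (hirr.separable).map
  have hnodup : F.roots.Nodup := Polynomial.nodup_roots hsep
  have hmem : ∀ i, a i ∈ F.roots := by
    intro i
    rw [mem_roots hF0, IsRoot, hFdef, eval_map, ← aeval_def]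
    exact hroots i
  have hne : ∀ i j : Fin 4, i ≠ j → a i ≠ a j := fun i j h e => h (hinj e)
  set S : Multiset ℂ := {a 0, a 1, a 2, a 3} with hSdef
  have hSnodup : S.Nodup := by
    simp only [hSdef, Multiset.insert_eq_cons, Multiset.nodup_cons, Multiset.mem_cons,
      Multiset.mem_singleton, Multiset.nodup_singleton, and_true]
    refine ⟨?_, ?_, ?_⟩
    · rintro (h | h | h)
      · exact hne 0 1 (by decide) h
      · exact hne 0 2 (by decide) h
      · exact hne 0 3 (by decide) h
    · rintro (h | h)
      · exact hne 1 2 (by decide) h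
      · exact hne 1 3 (by decide) h
    · exact hne 2 3 (by decide)
  have hSle : S ≤ F.roots := by
    rw [Multiset.le_iff_subset hSnodup]
    intro x hx
    simp only [hSdef, Multiset.insert_eq_cons, Multiset.mem_cons, Multiset.mem_singleton] at hx
    rcases hx with rfl | rfl | rfl | rfl
    · exact hmem 0
    · exact hmem 1
    · exact hmem 2
    · exact hmem 3
  set R : Multiset ℂ := F.roots - S with hRdef
  have hRcard : Multiset.card R = 2 := by
    rw [hRdef, Multiset.card_sub hSle, hcard6]
    simp [hSdef]
  obtain ⟨γ, δ, hR⟩ := Multiset.card_eq_two.1 hRcard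
  have hsplit : R + S = F.roots := tsub_add_cancel_of_le hSle
  have hsumS : S.sum = 0 := by
    simp only [hSdef, Multiset.insert_eq_cons, Multiset.sum_cons, Multiset.sum_singleton]
    rw [← hsum]; ring
  have hrootsum : F.roots.sum = γ + δ := by
    rw [← hsplit, Multiset.sum_add, hsumS, hR]
    simp
  set q : ℚ := -(f.coeff 5) with hqdef
  have hnext : F.nextCoeff = F.coeff 5 := by
    rw [nextCoeff_of_natDegree_pos (by omega), hFdeg]
  have hq : φ q = F.roots.sum := by
    have h := hsplits.nextCoeff_eq_neg_sum_roots_of_monic hFmon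
    rw [hnext] at h
    rw [hqdef, map_neg]
    rw [hFdef, coeff_map] at h
    linear_combination -h
  have hγR : γ ∈ R := by rw [hR]; exact Multiset.mem_cons_self _ _
  have hδR : δ ∈ R := by rw [hR]; simp
  have hRle : R ≤ F.roots := tsub_le_self
  have hγroot : γ ∈ F.roots := Multiset.mem_of_le hRle hγR
  have hδroot : δ ∈ F.roots := Multiset.mem_of_le hRle hδR
  have hevalδ : aeval δ f = 0 := by
    have h := (mem_roots hF0).1 hδroot
    rwa [IsRoot, hFdef, eval_map, ← aeval_def] at h
  have hevalγ : aeval γ f = 0 := by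
    have h := (mem_roots hF0).1 hγroot
    rwa [IsRoot, hFdef, eval_map, ← aeval_def] at h
  have hminγ : minpoly ℚ γ = f :=
    (minpoly.eq_of_irreducible_of_monic hirr hevalγ hmon).symm
  set g : ℚ[X] := f.comp (C q - X) with hgdef
  have hCqX : (C q - X : ℚ[X]) = -(X - C q) := by ring
  have hdeg1 : (C q - X : ℚ[X]).natDegree = 1 := by
    rw [hCqX, natDegree_neg, natDegree_X_sub_C]
  have hgval : aeval γ g = 0 := by
    rw [hgdef, aeval_comp]
    have hδ : aeval γ (C q - X : ℚ[X]) = δ := by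
      rw [map_sub, aeval_C, aeval_X]
      have h := hq.trans hrootsum
      linear_combination h
    rw [hδ]
    exact hevalδ
  have hdvd : f ∣ g := by
    rw [← hminγ]
    exact minpoly.dvd ℚ γ hgval
  have hgdeg : g.natDegree = 6 := by
    rw [hgdef, natDegree_comp, hdeg1, hdeg]
  have hgmon : g.Monic := by
    have hlc : (C q - X : ℚ[X]).leadingCoeff = -1 := by
      rw [hCqX, leadingCoeff_neg, (monic_X_sub_C q).leadingCoeff]
    have h : g.leadingCoeff = 1 := by
      rw [hgdef, leadingCoeff_comp (by rw [hdeg1]; norm_num), hlc, hmon.leadingCoeff, hdeg]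
      norm_num
    exact h
  have hfg : f = g := by
    obtain ⟨c, hc⟩ := hdvd
    have hg0 : g ≠ 0 := hgmon.ne_zero
    have hc0 : c ≠ 0 := by rintro rfl; rw [mul_zero] at hc; exact hg0 hc
    have hcdeg : c.natDegree = 0 := by
      have h := hgdeg
      rw [hc, natDegree_mul hf0 hc0, hdeg] at h
      omega
    have hcC : c = C (c.coeff 0) := eq_C_of_natDegree_eq_zero hcdeg
    have hlcg : g.leadingCoeff = f.leadingCoeff * c.leadingCoeff := by
      rw [hc, leadingCoeff_mul]
    rw [hgmon.leadingCoeff, hmon.leadingCoeff, one_mul, hcC, leadingCoeff_C] at hlcg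
    have hc1 : c = 1 := by
      rw [hcC, ← hlcg, C_1]
    rw [hc, hc1, mul_one]
  -- transfer to ℂ and show q = 0
  have hFg : F = F.comp (C (φ q) - X) := by
    conv_lhs => rw [hFdef, hfg]
    rw [hgdef, map_comp]
    simp [hFdef]
  set s : ℂ := φ q with hsdef
  have hrefl : ∀ x ∈ F.roots, s - x ∈ F.roots := by
    intro x hx
    rw [mem_roots hF0] at hx ⊢
    have h0 : eval x (F.comp (C s - X)) = 0 := by rw [← hFg]; exact hx
    rwa [eval_comp, eval_sub, eval_C, eval_X] at h0
  set M : Multiset ℂ := F.roots.map (fun x => s - x) with hMdef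
  have hMnodup : M.Nodup := hnodup.map (fun x y h => by
    have h' : s - x = s - y := h
    linear_combination -h')
  have hMle : M ≤ F.roots := by
    rw [Multiset.le_iff_subset hMnodup]
    intro x hx
    rw [hMdef, Multiset.mem_map] at hx
    obtain ⟨y, hy, rfl⟩ := hx
    exact hrefl y hy
  have hMeq : M = F.roots := Multiset.eq_of_le_of_card_le hMle (by simp [hMdef])
  have hMsum : M.sum = (Multiset.card F.roots) • s - F.roots.sum := by
    rw [hMdef, Multiset.sum_map_sub]
    simp [Multiset.map_const', Multiset.sum_replicate]
  have hs0 : s = 0 := by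
    have h1 : F.roots.sum = (Multiset.card F.roots) • s - F.roots.sum := by
      rw [← hMsum, hMeq]
    rw [hcard6, ← hq] at h1
    have h2 : (6 : ℕ) • s = (6 : ℂ) * s := by simp [nsmul_eq_mul]
    rw [h2] at h1
    linear_combination (-1/4 : ℂ) * h1
  have hq0 : q = 0 := by
    apply φ.injective
    rw [map_zero, ← hsdef, hs0]
  have hfneg : f = f.comp (-X) := by
    have h := hfg
    rw [hgdef, hq0, C_0, zero_sub] at h
    exact h
  have hodd : ∀ n, f.coeff n = (-1 : ℚ) ^ n * f.coeff n := by
    intro n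
    conv_lhs => rw [hfneg]
    rw [coeff_comp_neg_X]
  have ho : ∀ n, n % 2 = 1 → f.coeff n = 0 := by
    intro n hn
    have h := hodd n
    rw [Odd.neg_one_pow ⟨n / 2, by omega⟩] at h
    linarith
  have h6 : f.coeff 6 = 1 := by
    have := hmon.coeff_natDegree
    rwa [hdeg] at this
  refine ⟨f.coeff 4, f.coeff 2, f.coeff 0, ?_⟩
  ext n
  simp only [coeff_add, coeff_C_mul, coeff_X_pow, coeff_C]
  rcases le_or_gt n 6 with h | h
  · interval_cases n <;>
      simp [h6, ho 1 rfl, ho 3 rfl, ho 5 rfl]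
  · rw [coeff_eq_zero_of_natDegree_lt (by rw [hdeg]; omega)]
    have h0 : n ≠ 0 := by omega
    have h2 : n ≠ 2 := by omega
    have h4 : n ≠ 4 := by omega
    have h6' : n ≠ 6 := by omega
    simp [h0, h2, h4, h6']
end

section
/- If α is an algebraic number of degree d ∈ {4, 5, 6, 7} over ℚ, then no four distinct conjugates of α satisfy α₁ + α₂ + α₃ = α₄. -/
open Polynomial IntermediateField

noncomputable def lamF {K : Type*} [Field K] [Algebra ℚ K] (ρ : ℕ → K) (q : ℚ[X]) : K :=
  q.sum fun k c => c • ρ k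

lemma lamF_add {K : Type*} [Field K] [Algebra ℚ K] (ρ : ℕ → K) (q r : ℚ[X]) :
    lamF ρ (q + r) = lamF ρ q + lamF ρ r :=
  Polynomial.sum_add_index q r _ (fun k => zero_smul ℚ (ρ k))
    (fun k b₁ b₂ => add_smul b₁ b₂ (ρ k))

lemma lamF_zero {K : Type*} [Field K] [Algebra ℚ K] (ρ : ℕ → K) : lamF ρ 0 = 0 :=
  Polynomial.sum_zero_index _

lemma lamF_monomial {K : Type*} [Field K] [Algebra ℚ K] (ρ : ℕ → K) (n : ℕ) (a : ℚ) :
    lamF ρ (monomial n a) = a • ρ n :=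
  Polynomial.sum_monomial_index a _ (zero_smul ℚ (ρ n))

lemma lamF_neg {K : Type*} [Field K] [Algebra ℚ K] (ρ : ℕ → K) (q : ℚ[X]) :
    lamF ρ (-q) = - lamF ρ q := by
  have h := lamF_add ρ q (-q)
  rw [add_neg_cancel, lamF_zero] at h
  exact (neg_eq_of_add_eq_zero_right h.symm).symm

lemma lamF_sub {K : Type*} [Field K] [Algebra ℚ K] (ρ : ℕ → K) (q r : ℚ[X]) :
    lamF ρ (q - r) = lamF ρ q - lamF ρ r := by
  rw [sub_eq_add_neg, lamF_add, lamF_neg, sub_eq_add_neg]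

/-- Key lemma: if `ρ : ℕ → K` is `p`-periodic (`p` prime), and the shifted
4-term relations hold, with distinct exponents `< p`, then `ρ 0 = 0`. -/
lemma prime_cycle_zero {K : Type*} [Field K] [Algebra ℚ K]
    (p : ℕ) (hp : p.Prime) (ρ : ℕ → K) (e : Fin 4 → ℕ)
    (helt : ∀ i, e i < p) (heinj : Function.Injective e)
    (hper : ∀ n, ρ (n + p) = ρ n)
    (hrel : ∀ t, ρ (e 0 + t) + ρ (e 1 + t) + ρ (e 2 + t) - ρ (e 3 + t) = 0) :
    ρ 0 = 0 := by
  haveI : Fact p.Prime := ⟨hp⟩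
  set C : ℚ[X] := X ^ (e 0) + X ^ (e 1) + X ^ (e 2) - X ^ (e 3) with hC
  have hmulC : ∀ q : ℚ[X], lamF ρ (q * C) = 0 := by
    intro q
    induction q using Polynomial.induction_on' with
    | add q r hq hr => rw [add_mul, lamF_add, hq, hr, add_zero]
    | monomial n a =>
      have expand : (monomial n a) * C =
          monomial (e 0 + n) a + monomial (e 1 + n) a + monomial (e 2 + n) a
            - monomial (e 3 + n) a := by
        simp only [hC, mul_add, mul_sub, X_pow_eq_monomial, monomial_mul_monomial, mul_one]
        ring_nf
      rw [expand, lamF_sub, lamF_add, lamF_add, lamF_monomial, lamF_monomial,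
        lamF_monomial, lamF_monomial]
      linear_combination (norm := module) a • (hrel n)
  have hmulX : ∀ q : ℚ[X], lamF ρ (q * (X ^ p - 1)) = 0 := by
    intro q
    induction q using Polynomial.induction_on' with
    | add q r hq hr => rw [add_mul, lamF_add, hq, hr, add_zero]
    | monomial n a =>
      have expand : (monomial n a) * (X ^ p - 1) = monomial (n + p) a - monomial n a := by
        simp only [mul_sub, mul_one, X_pow_eq_monomial, monomial_mul_monomial]
      rw [expand, lamF_sub, lamF_monomial, lamF_monomial, hper n, sub_self]
  have hCeval : C.eval 1 = 2 := by norm_num [hC]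
  have hCne : C ≠ 0 := fun h => by simp [h] at hCeval
  have hdegC : C.natDegree < p := by
    have h1 : (X ^ (e 0) + X ^ (e 1) + X ^ (e 2) : ℚ[X]).natDegree < p := by
      apply lt_of_le_of_lt (natDegree_add_le _ _)
      simp only [max_lt_iff]
      constructor
      · apply lt_of_le_of_lt (natDegree_add_le _ _)
        simp only [max_lt_iff, natDegree_X_pow]
        exact ⟨helt 0, helt 1⟩
      · simpa only [natDegree_X_pow] using helt 2
    apply lt_of_le_of_lt (natDegree_sub_le _ _)
    simp only [max_lt_iff, natDegree_X_pow]
    exact ⟨h1, helt 3⟩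
  have hco : ∀ i j : Fin 4, ((X : ℚ[X]) ^ (e j)).coeff (e i) = if i = j then 1 else 0 := by
    intro i j
    rw [coeff_X_pow]
    by_cases h : i = j
    · subst h; simp
    · rw [if_neg (fun hh => h (heinj hh)), if_neg h]
  have hcoeff : ∀ i : Fin 4, C.coeff (e i) = if i = 3 then -1 else 1 := by
    intro i
    rw [hC, coeff_sub, coeff_add, coeff_add, hco i 0, hco i 1, hco i 2, hco i 3]
    fin_cases i <;> simp
  have hnd1 : ¬ (X - 1 : ℚ[X]) ∣ C := by
    intro h
    have := Polynomial.eval_dvd (q := C) h (x := 1)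
    rw [hCeval] at this
    simp at this
  have hnd2 : ¬ cyclotomic p ℚ ∣ C := by
    rintro ⟨q, hq⟩
    have hcycdeg : (cyclotomic p ℚ).natDegree = p - 1 := by
      rw [natDegree_cyclotomic, Nat.totient_prime hp]
    have hqne : q ≠ 0 := by rintro rfl; rw [mul_zero] at hq; exact hCne hq
    have hdeg : C.natDegree = (p - 1) + q.natDegree := by
      rw [hq, natDegree_mul (cyclotomic_ne_zero p ℚ) hqne, hcycdeg]
    have hq0 : q.natDegree = 0 := by omega
    obtain ⟨c, rfl⟩ := Polynomial.natDegree_eq_zero.mp hq0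
    have hcycco : ∀ k, k < p → (cyclotomic p ℚ).coeff k = 1 := by
      intro k hk
      rw [cyclotomic_prime, finset_sum_coeff]
      simp only [coeff_X_pow]
      simp [Finset.sum_ite_eq, Finset.sum_ite_eq', Finset.mem_range.mpr hk]
    have h0 : C.coeff (e 0) = c := by
      rw [hq, coeff_mul_C, hcycco _ (helt 0), one_mul]
    have h3 : C.coeff (e 3) = c := by
      rw [hq, coeff_mul_C, hcycco _ (helt 3), one_mul]
    rw [hcoeff 0] at h0
    rw [hcoeff 3] at h3
    simp at h0 h3
    rw [← h0] at h3
    norm_num at h3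
  have hirr1 : Irreducible (X - 1 : ℚ[X]) := by
    simpa using Polynomial.irreducible_X_sub_C (1 : ℚ)
  have hcop1 : IsCoprime (X - 1 : ℚ[X]) C := (hirr1.coprime_iff_not_dvd).2 hnd1
  have hcop2 : IsCoprime (cyclotomic p ℚ) C :=
    ((Polynomial.cyclotomic.irreducible_rat hp.pos).coprime_iff_not_dvd).2 hnd2
  have hfac : (X : ℚ[X]) ^ p - 1 = cyclotomic p ℚ * (X - 1) := by
    rw [cyclotomic_prime]; exact (geom_sum_mul (X : ℚ[X]) p).symm
  have hcop : IsCoprime ((X : ℚ[X]) ^ p - 1) C := by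
    rw [hfac]; exact hcop2.mul_left hcop1
  obtain ⟨u, v, huv⟩ := hcop.symm
  have hone : lamF ρ 1 = 0 := by
    rw [← huv, lamF_add, hmulC u, hmulX v, add_zero]
  rw [show (1 : ℚ[X]) = monomial 0 1 from (Polynomial.monomial_zero_one).symm,
    lamF_monomial, one_smul] at hone
  exact hone

/-- Parallelogram-law argument in `ℂ`. -/
lemma cx_pair_eq (u v x : ℂ) (h : u + v + x + x = 0)
    (hu : ‖u‖ ≤ ‖x‖) (hv : ‖v‖ ≤ ‖x‖) : u = v := by
  have h2 : Complex.normSq u ≤ Complex.normSq x := by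
    rw [← Complex.sq_norm, ← Complex.sq_norm]
    exact pow_le_pow_left₀ (norm_nonneg u) hu 2
  have h3 : Complex.normSq v ≤ Complex.normSq x := by
    rw [← Complex.sq_norm, ← Complex.sq_norm]
    exact pow_le_pow_left₀ (norm_nonneg v) hv 2
  have huv : u + v = -(x + x) := by linear_combination h
  have hpar : Complex.normSq (u - v) =
      2 * Complex.normSq u + 2 * Complex.normSq v - Complex.normSq (u + v) := by
    simp only [Complex.normSq_apply, Complex.add_re, Complex.add_im, Complex.sub_re,
      Complex.sub_im]
    ring
  have hval : Complex.normSq (u + v) = 4 * Complex.normSq x := by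
    rw [huv]
    simp only [Complex.normSq_apply, Complex.neg_re, Complex.neg_im, Complex.add_re,
      Complex.add_im]
    ring
  have hle : Complex.normSq (u - v) ≤ 0 := by
    rw [hpar, hval]; linarith
  have h0 : Complex.normSq (u - v) = 0 :=
    le_antisymm hle (Complex.normSq_nonneg _)
  have := Complex.normSq_eq_zero.mp h0
  linear_combination this

/-- If α has degree d ∈ {4,5,6,7} over ℚ, then no four distinct conjugates of α
satisfy α₁ + α₂ + α₃ = α₄. -/
theorem stmt_9 (α : ℂ) (hα : IsAlgebraic ℚ α)
    (hdeg : (minpoly ℚ α).natDegree ∈ ({4, 5, 6, 7} : Set ℕ)) :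
    ¬ ∃ a : Fin 4 → ℂ, Function.Injective a ∧
      (∀ i, aeval (a i) (minpoly ℚ α) = 0) ∧
      a 0 + a 1 + a 2 = a 3 := by
  classical
  rintro ⟨a, hainj, haroot, harel⟩
  set P := minpoly ℚ α with hPdef
  have hint : IsIntegral ℚ α := hα.isIntegral
  have hPmonic : P.Monic := minpoly.monic hint
  have hPirr : Irreducible P := minpoly.irreducible hint
  have hPne : P ≠ 0 := hPmonic.ne_zero
  simp only [Set.mem_insert_iff, Set.mem_singleton_iff] at hdeg
  have hd4 : 4 ≤ P.natDegree := by rcases hdeg with h|h|h|h <;> omega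
  -- splitting field setup
  set K := P.SplittingField with hK
  have hsplits : Splits (P.map (algebraMap ℚ K)) := SplittingField.splits P
  have hsplC : Splits (P.map (algebraMap ℚ ℂ)) := IsAlgClosed.splits _
  haveI : IsSplittingField ℚ K P := Polynomial.IsSplittingField.splittingField P
  set j : K →ₐ[ℚ] ℂ := SplittingField.lift P hsplC with hj
  have hjinj : Function.Injective j := j.toRingHom.injective
  have himg : j '' (P.rootSet K) = P.rootSet ℂ := hsplits.image_rootSet j
  have haset : ∀ i, a i ∈ P.rootSet ℂ := fun i => mem_rootSet.mpr ⟨hPne, haroot i⟩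
  have hbex : ∀ i : Fin 4, ∃ x, x ∈ P.rootSet K ∧ j x = a i := by
    intro i
    have h := haset i
    rw [← himg] at h
    rcases h with ⟨x, hx1, hx2⟩
    exact ⟨x, hx1, hx2⟩
  choose b hbmem hbj using hbex
  have hbroot : ∀ i, aeval (b i) P = 0 := fun i => aeval_eq_zero_of_mem_rootSet (hbmem i)
  have hbinj : Function.Injective b := fun i i' h => hainj (by rw [← hbj i, ← hbj i', h])
  have hbrel : b 0 + b 1 + b 2 = b 3 := by
    apply hjinj
    rw [map_add, map_add, hbj 0, hbj 1, hbj 2, hbj 3]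
    exact harel
  -- transitivity of the Galois action on roots
  have htrans : ∀ x y : K, aeval x P = 0 → aeval y P = 0 → ∃ σ : K ≃ₐ[ℚ] K, σ x = y := by
    intro x y hx hy
    have hminy : P = minpoly ℚ y := minpoly.eq_of_irreducible_of_monic hPirr hy hPmonic
    have halgy : IsAlgebraic ℚ y := ⟨P, hPne, hy⟩
    haveI : Normal ℚ K := Normal.of_isSplittingField P
    exact minpoly.exists_algEquiv_of_root halgy (by rw [← hminy]; exact hx)
  -- the finite set of roots in K
  have hsep : P.Separable := hPirr.separable
  set R : Finset K := (P.aroots K).toFinset with hR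
  have hnodup : (P.aroots K).Nodup := nodup_roots hsep.map
  have hRmem : ∀ x : K, x ∈ R ↔ aeval x P = 0 := by
    intro x
    rw [hR, Multiset.mem_toFinset, mem_aroots]
    exact ⟨fun h => h.2, fun h => ⟨hPne, h⟩⟩
  have hRcard : R.card = P.natDegree := by
    rw [hR, Multiset.toFinset_card_of_nodup hnodup]
    exact (hsplits.natDegree_eq_card_roots.symm.trans (natDegree_map _))
  -- stability of roots under automorphisms
  have hstable : ∀ (σ : K ≃ₐ[ℚ] K) (x : K), aeval x P = 0 → aeval (σ x) P = 0 := by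
    intro σ x hx
    rw [Polynomial.aeval_algHom_apply σ x P, hx, map_zero]
  -- sum over R is invariant under any automorphism
  have hRimage : ∀ σ : K ≃ₐ[ℚ] K, R.image (fun y => σ y) = R := by
    intro σ
    apply Finset.eq_of_subset_of_card_le
    · intro z hz
      rcases Finset.mem_image.mp hz with ⟨y, hy, rfl⟩
      exact (hRmem _).mpr (hstable σ y ((hRmem _).mp hy))
    · rw [Finset.card_image_of_injective _ σ.injective]
  have hsum_s : ∀ σ : K ≃ₐ[ℚ] K, ∑ y ∈ R, σ y = ∑ y ∈ R, y := by
    intro σ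
    conv_rhs => rw [← hRimage σ]
    rw [Finset.sum_image (fun x _ y _ h => σ.injective h)]
  -- averaging: the sum of all roots is zero
  haveI : FiniteDimensional ℚ K := inferInstance
  set T : K → K := fun x => ∑ σ : K ≃ₐ[ℚ] K, σ x with hT
  have hTconst : ∀ x y : K, aeval x P = 0 → aeval y P = 0 → T x = T y := by
    intro x y hx hy
    obtain ⟨τ, hτ⟩ := htrans y x hy hx
    calc T x = ∑ σ : K ≃ₐ[ℚ] K, σ (τ y) := by rw [hT]; simp only [hτ]
    _ = ∑ σ : K ≃ₐ[ℚ] K, (σ * τ) y := by simp only [AlgEquiv.mul_apply]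
    _ = T y := Fintype.sum_equiv (Equiv.mulRight τ) _ _ (fun σ => rfl)
  have hT3 : T (b 3) = 0 := by
    have h1 : ∑ σ : K ≃ₐ[ℚ] K, σ (b 0 + b 1 + b 2 - b 3) = 0 := by
      rw [show b 0 + b 1 + b 2 - b 3 = 0 from by rw [hbrel]; ring]
      simp
    have h2 : ∑ σ : K ≃ₐ[ℚ] K, σ (b 0 + b 1 + b 2 - b 3)
        = T (b 0) + T (b 1) + T (b 2) - T (b 3) := by
      simp only [map_add, map_sub]
      rw [Finset.sum_sub_distrib, Finset.sum_add_distrib, Finset.sum_add_distrib]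
    rw [h2, hTconst (b 0) (b 3) (hbroot 0) (hbroot 3),
      hTconst (b 1) (b 3) (hbroot 1) (hbroot 3),
      hTconst (b 2) (b 3) (hbroot 2) (hbroot 3)] at h1
    have h3 : (2 : K) * T (b 3) = 0 := by linear_combination h1
    rcases mul_eq_zero.mp h3 with h|h
    · exact absurd h two_ne_zero
    · exact h
  have hs0 : ∑ y ∈ R, y = 0 := by
    have hswap : ∑ σ : K ≃ₐ[ℚ] K, ∑ y ∈ R, σ y = ∑ y ∈ R, T y := Finset.sum_comm
    have hl : ∑ σ : K ≃ₐ[ℚ] K, ∑ y ∈ R, σ y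
        = (Fintype.card (K ≃ₐ[ℚ] K) : ℚ) • ∑ y ∈ R, y := by
      rw [Finset.sum_congr rfl (fun σ _ => hsum_s σ), Finset.sum_const, Finset.card_univ,
        Nat.cast_smul_eq_nsmul]
    have hr : ∑ y ∈ R, T y = 0 :=
      Finset.sum_eq_zero (fun y hy => by
        rw [hTconst y (b 3) ((hRmem y).mp hy) (hbroot 3)]; exact hT3)
    rw [hswap, hr] at hl
    have hcard : (Fintype.card (K ≃ₐ[ℚ] K) : ℚ) ≠ 0 := by
      exact_mod_cast Fintype.card_ne_zero
    exact (smul_eq_zero.mp hl.symm).resolve_left hcard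
  -- zero is not a root
  have hzero_notroot : ¬ aeval (0 : K) P = 0 := by
    intro h
    have heval : aeval (0 : K) P = algebraMap ℚ K (P.coeff 0) := by
      rw [Polynomial.aeval_def, Polynomial.eval₂_at_zero]
    rw [heval] at h
    have hcoeff0 : P.coeff 0 = 0 := (algebraMap ℚ K).injective (by simpa using h)
    have hX : (X : ℚ[X]) ∣ P := X_dvd_iff.mpr hcoeff0
    rcases hX with ⟨q, hq⟩
    rcases hPirr.isUnit_or_isUnit hq with h1 | h2
    · exact Polynomial.not_isUnit_X h1
    · have hqd : q.natDegree = 0 := Polynomial.natDegree_eq_zero_of_isUnit h2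
      have hqne : q ≠ 0 := by rintro rfl; rw [mul_zero] at hq; exact hPne hq
      have : P.natDegree = 1 := by
        rw [hq, natDegree_mul X_ne_zero hqne, natDegree_X, hqd]
      omega
  -- the prime-degree case (degrees 5 and 7)
  have hprime_case : ∀ p : ℕ, p.Prime → P.natDegree = p → False := by
    intro p hp hdp
    haveI : Fact p.Prime := ⟨hp⟩
    haveI : IsGalois ℚ K := IsGalois.of_separable_splitting_field hsep
    have hb3int : IsIntegral ℚ (b 3) := ⟨P, hPmonic, hbroot 3⟩
    have hmin3 : P = minpoly ℚ (b 3) :=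
      minpoly.eq_of_irreducible_of_monic hPirr (hbroot 3) hPmonic
    have hfr : Module.finrank ℚ ℚ⟮b 3⟯ = p := by
      rw [IntermediateField.adjoin.finrank hb3int, ← hmin3, hdp]
    have hdvd : p ∣ Fintype.card (K ≃ₐ[ℚ] K) := by
      rw [← Nat.card_eq_fintype_card, IsGalois.card_aut_eq_finrank ℚ K, ← Module.finrank_mul_finrank ℚ ℚ⟮b 3⟯ K, hfr]
      exact dvd_mul_right p _
    obtain ⟨σ, hσord⟩ := exists_prime_orderOf_dvd_card p hdvd
    have hσpow : σ ^ p = 1 := by rw [← hσord]; exact pow_orderOf_eq_one σ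
    have hmoved : ∃ x : K, aeval x P = 0 ∧ σ x ≠ x := by
      by_contra hcon
      push_neg at hcon
      have hσ1 : σ = 1 := by
        have htop : Algebra.adjoin ℚ (P.rootSet K) = ⊤ :=
          Polynomial.IsSplittingField.adjoin_rootSet K P
        have hle : Algebra.adjoin ℚ (P.rootSet K) ≤
            AlgHom.equalizer (σ : K →ₐ[ℚ] K) (AlgHom.id ℚ K) := by
          apply Algebra.adjoin_le
          intro x hx
          have hfix : σ x = x := hcon x (aeval_eq_zero_of_mem_rootSet hx)
          simpa [AlgHom.mem_equalizer] using hfix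
        apply AlgEquiv.ext
        intro z
        have hz : z ∈ AlgHom.equalizer (σ : K →ₐ[ℚ] K) (AlgHom.id ℚ K) :=
          hle (htop ▸ Algebra.mem_top)
        simpa using hz
      rw [hσ1, orderOf_one] at hσord
      have := hp.one_lt
      omega
    obtain ⟨x0, hx0root, hx0ne⟩ := hmoved
    set ρ : ℕ → K := fun k => (σ ^ k) x0 with hρ
    have hρ0 : ρ 0 = x0 := by simp [hρ]
    have hρper : ∀ n, ρ (n + p) = ρ n := by
      intro n
      show (σ ^ (n + p)) x0 = (σ ^ n) x0
      rw [pow_add, AlgEquiv.mul_apply, hσpow]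
      simp
    have hρroot : ∀ k, aeval (ρ k) P = 0 := fun k => hstable (σ ^ k) x0 hx0root
    have hρshift : ∀ t k, (σ ^ t) (ρ k) = ρ (k + t) := by
      intro t k
      show (σ ^ t) ((σ ^ k) x0) = (σ ^ (k + t)) x0
      rw [← AlgEquiv.mul_apply, ← pow_add, add_comm t k]
    have hfixpow : ∀ t, 0 < t → t < p → (σ ^ t) x0 ≠ x0 := by
      intro t ht0 htp hfix
      have hiter : ∀ k : ℕ, (σ ^ (t * k)) x0 = x0 := by
        intro k
        induction k with
        | zero => simp
        | succ k ih => rw [Nat.mul_succ, pow_add, AlgEquiv.mul_apply, hfix, ih]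
      have hcop : Nat.Coprime t p :=
        Nat.coprime_comm.mp ((hp.coprime_iff_not_dvd).mpr (Nat.not_dvd_of_pos_of_lt ht0 htp))
      obtain ⟨m, -, hm⟩ := Nat.exists_mul_mod_eq_one_of_coprime hcop hp.one_lt
      have h1 := hiter m
      have hdiv : t * m = p * (t * m / p) + 1 := by
        conv_lhs => rw [← Nat.div_add_mod (t * m) p]
        rw [hm]
      rw [hdiv, pow_add, pow_mul, hσpow, one_pow, pow_one, AlgEquiv.mul_apply] at h1
      simp only [AlgEquiv.one_apply] at h1
      exact hx0ne h1
    have hρinj : ∀ m n : ℕ, m < p → n < p → ρ m = ρ n → m = n := by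
      have key : ∀ m n : ℕ, m < n → n < p → ρ m = ρ n → False := by
        intro m n hmn hn heq
        have h2 : (σ ^ m) ((σ ^ (n - m)) x0) = (σ ^ m) x0 := by
          rw [← AlgEquiv.mul_apply, ← pow_add]
          have hsum : m + (n - m) = n := by omega
          rw [hsum]
          exact heq.symm
        have h3 : (σ ^ (n - m)) x0 = x0 := (σ ^ m).injective h2
        exact hfixpow (n - m) (by omega) (by omega) h3
      intro m n hm hn heq
      rcases lt_trichotomy m n with h | h | h
      · exact absurd (key m n h hn heq) (fun h => h)
      · exact h
      · exact absurd (key n m h hm heq.symm) (fun h => h)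
    have hRimg : R = (Finset.range p).image ρ := by
      symm
      apply Finset.eq_of_subset_of_card_le
      · intro z hz
        rcases Finset.mem_image.mp hz with ⟨k, _, rfl⟩
        exact (hRmem _).mpr (hρroot k)
      · rw [hRcard, hdp,
          Finset.card_image_of_injOn (fun x hx y hy hxy =>
            hρinj x y (Finset.mem_range.mp hx) (Finset.mem_range.mp hy) hxy),
          Finset.card_range]
    have hbR : ∀ i, b i ∈ (Finset.range p).image ρ := fun i => by
      rw [← hRimg]; exact (hRmem _).mpr (hbroot i)
    choose e he1 he2 using fun i => Finset.mem_image.mp (hbR i)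
    have helt : ∀ i, e i < p := fun i => Finset.mem_range.mp (he1 i)
    have heinj : Function.Injective e := fun i i' h => hbinj (by rw [← he2 i, ← he2 i', h])
    have hrelshift : ∀ t, ρ (e 0 + t) + ρ (e 1 + t) + ρ (e 2 + t) - ρ (e 3 + t) = 0 := by
      intro t
      have h : (σ ^ t) (b 0 + b 1 + b 2) = (σ ^ t) (b 3) := by rw [hbrel]
      rw [map_add, map_add] at h
      rw [← he2 0, ← he2 1, ← he2 2, ← he2 3] at h
      rw [hρshift t (e 0), hρshift t (e 1), hρshift t (e 2), hρshift t (e 3)] at h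
      rw [sub_eq_zero]
      exact h
    have hzero := prime_cycle_zero p hp ρ e helt heinj hρper hrelshift
    rw [hρ0] at hzero
    exact hzero_notroot (hzero ▸ hx0root)
  -- now split into cases
  rcases hdeg with hd | hd | hd | hd
  -- degree 4
  · have h4 : Finset.univ.image b = R := by
      apply Finset.eq_of_subset_of_card_le
      · intro z hz
        rcases Finset.mem_image.mp hz with ⟨i, _, rfl⟩
        exact (hRmem _).mpr (hbroot i)
      · rw [hRcard, hd, Finset.card_image_of_injective _ hbinj, Finset.card_univ,
          Fintype.card_fin]
    have hsum4 : ∑ y ∈ R, y = b 0 + b 1 + b 2 + b 3 := by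
      rw [← h4, Finset.sum_image (fun x _ y _ h => hbinj h), Fin.sum_univ_four]
    have hb30 : b 3 = 0 := by
      have h0 : b 3 + b 3 = 0 := by
        rw [← hs0, hsum4, hbrel]
      have := mul_eq_zero.mp (show (2 : K) * b 3 = 0 by linear_combination h0)
      exact this.resolve_left two_ne_zero
    exact hzero_notroot (hb30 ▸ hbroot 3)
  -- degree 5 (prime)
  · exact hprime_case 5 (by norm_num) hd
  -- degree 6
  · -- pick the root of maximal absolute value in ℂ
    set RC : Finset ℂ := (P.aroots ℂ).toFinset with hRC
    have hRCmem : ∀ x : ℂ, x ∈ RC ↔ aeval x P = 0 := by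
      intro x
      rw [hRC, Multiset.mem_toFinset, mem_aroots]
      exact ⟨fun h => h.2, fun h => ⟨hPne, h⟩⟩
    have hRCne : RC.Nonempty := ⟨a 0, (hRCmem _).mpr (haroot 0)⟩
    obtain ⟨x, hxRC, hxmax⟩ := Finset.exists_max_image RC (fun z : ℂ => ‖z‖) hRCne
    have hxroot : aeval x P = 0 := (hRCmem _).mp hxRC
    have hxK : ∃ x', x' ∈ P.rootSet K ∧ j x' = x := by
      have h : x ∈ P.rootSet ℂ := mem_rootSet.mpr ⟨hPne, hxroot⟩
      rw [← himg] at h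
      rcases h with ⟨x', h1, h2⟩
      exact ⟨x', h1, h2⟩
    obtain ⟨x', hx'mem, hx'j⟩ := hxK
    have hx'root : aeval x' P = 0 := aeval_eq_zero_of_mem_rootSet hx'mem
    obtain ⟨σ, hσ3⟩ := htrans (b 3) x' (hbroot 3) hx'root
    set c : Fin 4 → K := fun i => σ (b i) with hc
    have hcroot : ∀ i, aeval (c i) P = 0 := fun i => hstable σ (b i) (hbroot i)
    have hcinj : Function.Injective c := fun i i' h => hbinj (σ.injective h)
    have hcrel : c 0 + c 1 + c 2 = c 3 := by
      show σ (b 0) + σ (b 1) + σ (b 2) = σ (b 3)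
      rw [← map_add, ← map_add, hbrel]
    have hc3 : c 3 = x' := hσ3
    set Q : Finset K := Finset.univ.image c with hQ
    have hQsub : Q ⊆ R := by
      intro z hz
      rcases Finset.mem_image.mp hz with ⟨i, _, rfl⟩
      exact (hRmem _).mpr (hcroot i)
    have hQcard : Q.card = 4 := by
      rw [hQ, Finset.card_image_of_injective _ hcinj, Finset.card_univ, Fintype.card_fin]
    have hScard : (R \ Q).card = 2 := by
      rw [Finset.card_sdiff_of_subset hQsub, hRcard, hd, hQcard]
    obtain ⟨u', v', huvne, hSuv⟩ := Finset.card_eq_two.mp hScard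
    have hsumQ : ∑ y ∈ Q, y = c 3 + c 3 := by
      rw [hQ, Finset.sum_image (fun i _ i' _ h => hcinj h), Fin.sum_univ_four]
      linear_combination hcrel
    have hsdiff : ∑ y ∈ R \ Q, y + ∑ y ∈ Q, y = ∑ y ∈ R, y := Finset.sum_sdiff hQsub
    have hsumS : u' + v' + (c 3 + c 3) = 0 := by
      rw [hSuv, Finset.sum_pair huvne] at hsdiff
      rw [← hsumQ]
      rw [hs0] at hsdiff
      exact hsdiff
    have huS : u' ∈ R \ Q := by rw [hSuv]; exact Finset.mem_insert_self _ _
    have hvS : v' ∈ R \ Q := by rw [hSuv]; exact Finset.mem_insert_of_mem (Finset.mem_singleton_self _)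
    have huR : u' ∈ R := (Finset.mem_sdiff.mp huS).1
    have hvR : v' ∈ R := (Finset.mem_sdiff.mp hvS).1
    have hjroot : ∀ z : K, aeval z P = 0 → aeval (j z) P = 0 := by
      intro z hz
      rw [Polynomial.aeval_algHom_apply j z P, hz, map_zero]
    have huC : aeval (j u') P = 0 := hjroot u' ((hRmem _).mp huR)
    have hvC : aeval (j v') P = 0 := hjroot v' ((hRmem _).mp hvR)
    have huabs : ‖j u'‖ ≤ ‖x‖ := hxmax _ ((hRCmem _).mpr huC)
    have hvabs : ‖j v'‖ ≤ ‖x‖ := hxmax _ ((hRCmem _).mpr hvC)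
    have hrelC : j u' + j v' + x + x = 0 := by
      have h := congrArg j hsumS
      rw [map_add, map_add, map_add, hc3, hx'j, map_zero] at h
      linear_combination h
    have heq := cx_pair_eq (j u') (j v') x hrelC huabs hvabs
    exact huvne (hjinj heq)
  -- degree 7 (prime)
  · exact hprime_case 7 (by norm_num) hd
end

section
/- Let α be an algebraic number of degree 4 over ℚ with tr(α) = 0. If four distinct conjugates of α satisfy α₁ + α₂ = α₃ + α₄, then the minimal polynomial of α has the form x⁴ + a x² + b for some a, b ∈ ℚ. Conversely, for any irreducible polynomial of this form, some four distinct roots satisfy α₁ + α₂ = α₃ + α₄. -/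
open Polynomial

private lemma stmt_10_part1 (α : ℂ) (halg : IsAlgebraic ℚ α) (hdeg : (minpoly ℚ α).natDegree = 4)
    (htr : ((minpoly ℚ α).map (algebraMap ℚ ℂ)).roots.sum = 0)
    (hex : ∃ a : Fin 4 → ℂ, Function.Injective a ∧
      (∀ i, aeval (a i) (minpoly ℚ α) = 0) ∧ a 0 + a 1 = a 2 + a 3) :
    ∃ p q : ℚ, minpoly ℚ α = X ^ 4 + C p * X ^ 2 + C q := by
  obtain ⟨a, hainj, haroot, hasum⟩ := hex
  set P := minpoly ℚ α with hP
  have hP0 : P ≠ 0 := minpoly.ne_zero halg.isIntegral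
  have hmonic : P.Monic := minpoly.monic halg.isIntegral
  set Pc := P.map (algebraMap ℚ ℂ) with hPc
  have hPc0 : Pc ≠ 0 := (Polynomial.map_ne_zero_iff (algebraMap ℚ ℂ).injective).2 hP0
  have hirr : Irreducible P := minpoly.irreducible halg.isIntegral
  have hnodup : Pc.roots.Nodup := nodup_roots (hirr.separable.map)
  have hcard : Pc.roots.card = 4 := by
    have hs : Pc.Splits := IsAlgClosed.splits Pc
    rw [splits_iff_card_roots.1 hs, hPc, natDegree_map, hdeg]
  have hmem : ∀ i, a i ∈ Pc.roots := by
    intro i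
    rw [mem_roots hPc0, IsRoot, hPc, eval_map, ← aeval_def]
    exact haroot i
  set s : Multiset ℂ := (Finset.univ : Finset (Fin 4)).val.map a with hs
  have hsnodup : s.Nodup := (Finset.univ : Finset (Fin 4)).nodup.map hainj
  have hsub : s ⊆ Pc.roots := by
    intro x hx
    rw [hs, Multiset.mem_map] at hx
    obtain ⟨i, _, rfl⟩ := hx
    exact hmem i
  have hle : s ≤ Pc.roots := (Multiset.le_iff_subset hsnodup).2 hsub
  have hscard : s.card = 4 := by simp [hs]
  have hseq : s = Pc.roots := Multiset.eq_of_le_of_card_le hle (by omega)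
  have hsum4 : a 0 + a 1 + a 2 + a 3 = 0 := by
    have h1 : s.sum = ∑ i : Fin 4, a i := rfl
    rw [hseq, htr, Fin.sum_univ_four] at h1
    linear_combination -h1
  have h01 : a 1 = -a 0 := by linear_combination (hsum4 + hasum) / 2
  have h23 : a 3 = -a 2 := by linear_combination (hsum4 - hasum) / 2
  have hprodeq : Pc = (Pc.roots.map fun r => X - C r).prod := by
    have := C_leadingCoeff_mul_prod_multiset_X_sub_C (p := Pc) (by rw [hcard, hPc, natDegree_map, hdeg])
    rw [(hmonic.map (algebraMap ℚ ℂ)).leadingCoeff, map_one, one_mul] at this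
    exact this.symm
  have hfact : Pc = X ^ 4 + C (-(a 0 ^ 2 + a 2 ^ 2)) * X ^ 2 + C (a 0 ^ 2 * a 2 ^ 2) := by
    rw [hprodeq, ← hseq, hs, Multiset.map_map]
    have : (Multiset.map (fun i => X - C (a i)) (Finset.univ : Finset (Fin 4)).val).prod
        = ∏ i : Fin 4, (X - C (a i)) := rfl
    rw [Function.comp_def, this, Fin.prod_univ_four, h01, h23]
    simp only [map_neg, map_add, map_mul, map_pow]
    ring
  have hc3 : P.coeff 3 = 0 := by
    have h := congrArg (fun g => g.coeff 3) hfact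
    simp only [hPc, coeff_map, coeff_add, coeff_X_pow, coeff_C_mul, coeff_C] at h
    norm_num at h
    exact h
  have hc1 : P.coeff 1 = 0 := by
    have h := congrArg (fun g => g.coeff 1) hfact
    simp only [hPc, coeff_map, coeff_add, coeff_X_pow, coeff_C_mul, coeff_C] at h
    norm_num at h
    exact h
  have hc4 : P.coeff 4 = 1 := by
    have := hmonic.leadingCoeff
    rwa [leadingCoeff, hdeg] at this
  refine ⟨P.coeff 2, P.coeff 0, ?_⟩
  ext n
  rcases n with _ | _ | _ | _ | _ | n
  · simp [coeff_X_pow]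
  · simp [coeff_X_pow, hc1]
  · simp [coeff_X_pow]
  · simp [coeff_X_pow, hc3]
  · simp [coeff_X_pow, hc4]
  · have hl : P.coeff (n + 5) = 0 := coeff_eq_zero_of_natDegree_lt (by omega)
    rw [hl]
    simp [coeff_X_pow]

private lemma stmt_10_part2 (p q : ℚ) (hirr : Irreducible (X ^ 4 + C p * X ^ 2 + C q)) :
    ∃ r : Fin 4 → ℂ, Function.Injective r ∧
      (∀ i, aeval (r i) (X ^ 4 + C p * X ^ 2 + C q) = 0) ∧
      r 0 + r 1 = r 2 + r 3 := by
  set f : ℚ[X] := X ^ 4 + C p * X ^ 2 + C q with hf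
  have hdeg : f.natDegree = 4 := by unfold f; compute_degree!
  have hq : q ≠ 0 := by
    rintro rfl
    have : f = (X ^ 2 + C p) * X ^ 2 := by rw [hf, map_zero]; ring
    rcases hirr.isUnit_or_isUnit this with h | h
    · refine (Polynomial.not_isUnit_of_natDegree_pos _ ?_) h
      have : (X ^ 2 + C p : ℚ[X]).natDegree = 2 := by compute_degree!
      omega
    · refine (Polynomial.not_isUnit_of_natDegree_pos _ ?_) h
      have : (X ^ 2 : ℚ[X]).natDegree = 2 := by compute_degree!
      omega
  have hf0 : f ≠ 0 := fun h => by simp [h] at hdeg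
  set fc := f.map (algebraMap ℚ ℂ) with hfc
  have hfc0 : fc ≠ 0 := (Polynomial.map_ne_zero_iff (algebraMap ℚ ℂ).injective).2 hf0
  have hroot : ∀ x : ℂ, x ∈ fc.roots ↔ aeval x f = 0 := by
    intro x
    rw [mem_roots hfc0, IsRoot, hfc, eval_map, ← aeval_def]
  have haev : ∀ x : ℂ, aeval x f = x ^ 4 + (algebraMap ℚ ℂ) p * x ^ 2 + (algebraMap ℚ ℂ) q := by
    intro x; simp [hf]
  have hnz : ∀ x : ℂ, x ∈ fc.roots → x ≠ 0 := by
    rintro x hx rfl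
    rw [hroot, haev] at hx
    simp at hx
    exact hq hx
  have hneg : ∀ x : ℂ, x ∈ fc.roots → -x ∈ fc.roots := by
    intro x hx
    rw [hroot, haev] at hx ⊢
    rw [← hx]; ring
  have hsep : f.Separable := hirr.separable
  have hnodup : fc.roots.Nodup := nodup_roots (hsep.map)
  have hcard : fc.roots.card = 4 := by
    have hs : fc.Splits := IsAlgClosed.splits fc
    rw [splits_iff_card_roots.1 hs, hfc, natDegree_map, hdeg]
  set T := fc.roots.toFinset with hT
  have hTcard : T.card = 4 := by rw [hT, Multiset.toFinset_card_of_nodup hnodup, hcard]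
  have hTne : T.Nonempty := Finset.card_pos.1 (by omega)
  obtain ⟨β, hβ⟩ := hTne
  rw [hT, Multiset.mem_toFinset] at hβ
  obtain ⟨γ, hγT, hγ12⟩ : ∃ γ ∈ T, γ ∉ ({β, -β} : Finset ℂ) := by
    by_contra h
    push_neg at h
    have h2 := Finset.card_le_card h
    have h3 : ({β, -β} : Finset ℂ).card ≤ 2 :=
      (Finset.card_insert_le _ _).trans (by simp)
    omega
  rw [hT, Multiset.mem_toFinset] at hγT
  simp only [Finset.mem_insert, Finset.mem_singleton, not_or] at hγ12
  obtain ⟨hγβ, hγnβ⟩ := hγ12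
  have hβ0 := hnz β hβ
  have hγ0 := hnz γ hγT
  have h1 : β ≠ -β := fun h => hβ0 (by linear_combination h/2)
  have h6 : γ ≠ -γ := fun h => hγ0 (by linear_combination h/2)
  have h2 : β ≠ γ := fun h => hγβ h.symm
  have h3 : β ≠ -γ := fun h => hγnβ (by linear_combination h)
  have h4 : -β ≠ γ := fun h => hγnβ h.symm
  have h5 : -β ≠ -γ := fun h => hγβ (by linear_combination h)
  refine ⟨![β, -β, γ, -γ], ?_, ?_, by simp⟩
  · intro i j hij
    fin_cases i <;> fin_cases j <;>
      simp only [Matrix.cons_val_zero, Matrix.cons_val_one, Matrix.head_cons,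
        Matrix.cons_val_two, Matrix.tail_cons, Matrix.cons_val_three] at hij <;>
      first | rfl | exact absurd hij ‹_› | exact absurd hij.symm ‹_›
  · intro i
    fin_cases i <;>
      simp only [Matrix.cons_val_zero, Matrix.cons_val_one, Matrix.head_cons,
        Matrix.cons_val_two, Matrix.tail_cons, Matrix.cons_val_three]
    · exact (hroot β).1 hβ
    · exact (hroot _).1 (hneg β hβ)
    · exact (hroot γ).1 hγT
    · exact (hroot _).1 (hneg γ hγT)


/-- For α of degree 4 over ℚ with tr(α) = 0: if four distinct conjugates satisfy
α₁ + α₂ = α₃ + α₄ then the minimal polynomial of α has the form x⁴ + a x² + b;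
conversely any irreducible polynomial of this form has four distinct roots
satisfying the relation. -/
theorem stmt_10 :
    (∀ α : ℂ, IsAlgebraic ℚ α → (minpoly ℚ α).natDegree = 4 →
      ((minpoly ℚ α).map (algebraMap ℚ ℂ)).roots.sum = 0 →
      (∃ a : Fin 4 → ℂ, Function.Injective a ∧
        (∀ i, aeval (a i) (minpoly ℚ α) = 0) ∧
        a 0 + a 1 = a 2 + a 3) →
      ∃ p q : ℚ, minpoly ℚ α = X ^ 4 + C p * X ^ 2 + C q) ∧
    (∀ p q : ℚ, Irreducible (X ^ 4 + C p * X ^ 2 + C q) →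
      ∃ r : Fin 4 → ℂ, Function.Injective r ∧
        (∀ i, aeval (r i) (X ^ 4 + C p * X ^ 2 + C q) = 0) ∧
        r 0 + r 1 = r 2 + r 3) := by
  exact ⟨stmt_10_part1, stmt_10_part2⟩
end

section
/- If α is an algebraic number of degree 5 or 7 over ℚ, then no four distinct conjugates of α satisfy α₁ + α₂ = α₃ + α₄. -/
open Polynomial Finset


lemma sum_zmod (p : ℕ) [NeZero p] (F : ℕ → ℂ) : ∑ k : ZMod p, F k.val = ∑ i ∈ Finset.range p, F i := by
  refine Finset.sum_nbij' (i := fun (k : ZMod p) => k.val) (j := fun i => (i : ZMod p)) ?_ ?_ ?_ ?_ ?_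
  · intro a _; exact Finset.mem_range.mpr (ZMod.val_lt a)
  · intros; exact Finset.mem_univ _
  · intro a _; exact ZMod.natCast_rightInverse a
  · intro i hi; exact ZMod.val_cast_of_lt (Finset.mem_range.mp hi)
  · intros; rfl


lemma four_pows_ne {p : ℕ} (hp : p.Prime) (hp4 : 4 < p) {ζ : ℂ} (hζ : IsPrimitiveRoot ζ p)
    (n : Fin 4 → ZMod p) (hn : Function.Injective n) :
    ζ ^ (n 0).val + ζ ^ (n 1).val - ζ ^ (n 2).val - ζ ^ (n 3).val ≠ 0 := by
  haveI : NeZero p := ⟨hp.ne_zero⟩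
  haveI : Fact p.Prime := ⟨hp⟩
  intro h
  set v : Fin 4 → ℕ := fun i => (n i).val with hv
  have hvinj : Function.Injective v := fun i j hij => hn (ZMod.val_injective p hij)
  have hvlt : ∀ i, v i < p := fun i => ZMod.val_lt _
  set Q : ℚ[X] := X ^ v 0 + X ^ v 1 - X ^ v 2 - X ^ v 3 with hQ
  have haev : aeval ζ Q = 0 := by
    simp only [hQ, map_sub, map_add, map_pow, aeval_X]
    linear_combination h
  have hint : IsIntegral ℚ ζ :=
    ⟨X ^ p - C 1, monic_X_pow_sub_C 1 hp.ne_zero,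
      by simp [eval₂_sub, hζ.pow_eq_one]⟩
  have hdvd : cyclotomic p ℚ ∣ Q := by
    rw [cyclotomic_eq_minpoly_rat hζ hp.pos]
    exact minpoly.dvd ℚ ζ haev
  have hcoeff : ∀ m : ℕ, Q.coeff m =
      (if m = v 0 then 1 else 0) + (if m = v 1 then 1 else 0)
      - (if m = v 2 then 1 else 0) - (if m = v 3 then 1 else 0) := by
    intro m
    simp [hQ, coeff_X_pow]
  have hne : ∀ i j : Fin 4, i ≠ j → v i ≠ v j := fun i j hij e => hij (hvinj e)
  have hc0 : Q.coeff (v 0) = 1 := by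
    rw [hcoeff, if_pos rfl, if_neg (hne 1 0 (by decide)).symm,
      if_neg (hne 2 0 (by decide)).symm, if_neg (hne 3 0 (by decide)).symm]
    norm_num
  have hQne : Q ≠ 0 := fun h0 => by simp [h0] at hc0
  obtain ⟨g, hg⟩ := hdvd
  have hΦmonic := cyclotomic.monic p ℚ
  have hΦne : cyclotomic p ℚ ≠ 0 := hΦmonic.ne_zero
  have hgne : g ≠ 0 := fun h0 => hQne (by rw [hg, h0, mul_zero])
  have hdegQ : Q.degree < (p : ℕ) := by
    have hX : ∀ i : Fin 4, (X ^ v i : ℚ[X]).degree < (p : ℕ) := by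
      intro i; rw [degree_X_pow]; exact_mod_cast hvlt i
    refine lt_of_le_of_lt (degree_sub_le _ _) (max_lt ?_ (hX 3))
    refine lt_of_le_of_lt (degree_sub_le _ _) (max_lt ?_ (hX 2))
    exact lt_of_le_of_lt (degree_add_le _ _) (max_lt (hX 0) (hX 1))
  have hndegQ : Q.natDegree < p := (natDegree_lt_iff_degree_lt hQne).mpr hdegQ
  have hndegΦ : (cyclotomic p ℚ).natDegree = p - 1 := by
    rw [natDegree_cyclotomic, Nat.totient_prime hp]
  have hgdeg : g.natDegree = 0 := by
    have := natDegree_mul hΦne hgne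
    rw [← hg, hndegΦ] at this
    omega
  obtain ⟨c, hc⟩ := natDegree_eq_zero.mp hgdeg
  have hΦcoeff : ∀ m : ℕ, m < p → (cyclotomic p ℚ).coeff m = 1 := by
    intro m hm
    rw [cyclotomic_prime, ← Polynomial.lcoeff_apply, map_sum]
    simp only [Polynomial.lcoeff_apply, coeff_X_pow]
    rw [Finset.sum_ite_eq (range p) m (fun _ => (1:ℚ))]
    simp [hm]
  have hQc : ∀ m : ℕ, m < p → Q.coeff m = c := by
    intro m hm
    rw [hg, ← hc, coeff_mul_C, hΦcoeff m hm, one_mul]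
  -- find an exponent not among the four
  have hns : ¬ (range p ⊆ {v 0, v 1, v 2, v 3}) := by
    intro hsub
    have h1 := Finset.card_le_card hsub
    have h2 : ({v 0, v 1, v 2, v 3} : Finset ℕ).card ≤ 4 := by
      refine le_trans (Finset.card_insert_le _ _) ?_
      refine Nat.succ_le_succ (le_trans (Finset.card_insert_le _ _) ?_)
      refine Nat.succ_le_succ (le_trans (Finset.card_insert_le _ _) ?_)
      simp
    rw [Finset.card_range] at h1
    omega
  obtain ⟨e, he, hemem⟩ := Finset.not_subset.mp hns
  have helt : e < p := Finset.mem_range.mp he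
  simp only [Finset.mem_insert, Finset.mem_singleton, not_or] at hemem
  have hce : Q.coeff e = 0 := by
    rw [hcoeff, if_neg hemem.1, if_neg hemem.2.1, if_neg hemem.2.2.1, if_neg hemem.2.2.2]
    norm_num
  have h1 : (1:ℚ) = c := by rw [← hc0]; exact hQc (v 0) (hvlt 0)
  have h0 : (0:ℚ) = c := by rw [← hce]; exact hQc e helt
  rw [← h1] at h0
  exact one_ne_zero h0.symm



lemma core {p : ℕ} (hp : p.Prime) (hp4 : 4 < p) {ζ : ℂ} (hζ : IsPrimitiveRoot ζ p)
    (r : ZMod p → ℂ) (n : Fin 4 → ZMod p) (hn : Function.Injective n)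
    (hr : ∀ t : ZMod p, r (n 0 + t) + r (n 1 + t) = r (n 2 + t) + r (n 3 + t)) :
    r 1 = r 0 := by
  haveI : NeZero p := ⟨hp.ne_zero⟩
  haveI : Fact p.Prime := ⟨hp⟩
  have hζ1 : ζ ^ p = 1 := hζ.pow_eq_one
  have hmod : ∀ a : ℕ, ζ ^ (a % p) = ζ ^ a := by
    intro a
    conv_rhs => rw [← Nat.div_add_mod a p]
    rw [pow_add, pow_mul, hζ1, one_pow, one_mul]
  set z : ZMod p → ℂ := fun j => ζ ^ j.val with hzdef
  have hzadd : ∀ i j : ZMod p, z (i + j) = z i * z j := by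
    intro i j
    show ζ ^ (i + j).val = ζ ^ i.val * ζ ^ j.val
    rw [ZMod.val_add, hmod, pow_add]
  have hz0 : z 0 = 1 := by show ζ ^ (0 : ZMod p).val = 1; rw [ZMod.val_zero, pow_zero]
  have hzsum : ∑ k : ZMod p, z k = 0 := by
    show ∑ k : ZMod p, ζ ^ k.val = 0
    rw [sum_zmod p (fun i => ζ ^ i)]
    exact hζ.geom_sum_eq_zero hp.one_lt
  have orth : ∀ m : ZMod p, m ≠ 0 → ∑ k : ZMod p, z (m * k) = 0 := by
    intro m hm
    have := Equiv.sum_comp (Equiv.mulLeft₀ m hm) z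
    simp only [Equiv.mulLeft₀_apply] at this
    rw [this]
    exact hzsum
  set S : ZMod p → ℂ := fun k => ∑ j : ZMod p, z (k * j) * r j with hSdef
  have hpart : ∀ (k : ZMod p) (i : Fin 4),
      ∑ t : ZMod p, z (k * t) * r (n i + t) = z (-(k * n i)) * S k := by
    intro k i
    have := Equiv.sum_comp (Equiv.addLeft (n i)) (fun s => z (k * (s - n i)) * r s)
    simp only [Equiv.coe_addLeft] at this
    calc ∑ t : ZMod p, z (k * t) * r (n i + t)
        = ∑ t : ZMod p, z (k * (n i + t - n i)) * r (n i + t) := by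
          apply Finset.sum_congr rfl; intros; rw [add_sub_cancel_left]
      _ = ∑ s : ZMod p, z (k * (s - n i)) * r s := this
      _ = z (-(k * n i)) * S k := by
          rw [hSdef, Finset.mul_sum]
          apply Finset.sum_congr rfl; intro s _
          rw [← mul_assoc, ← hzadd]
          ring_nf
  have hS : ∀ k : ZMod p, k ≠ 0 → S k = 0 := by
    intro k hk
    have hT : ∑ t : ZMod p,
        z (k * t) * (r (n 0 + t) + r (n 1 + t) - r (n 2 + t) - r (n 3 + t)) = 0 := by
      apply Finset.sum_eq_zero; intro t _
      rw [show r (n 0 + t) + r (n 1 + t) - r (n 2 + t) - r (n 3 + t) = 0 by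
        linear_combination hr t, mul_zero]
    have hninj : Function.Injective (fun i : Fin 4 => -(k * n i)) := by
      intro i j hij
      simp only [neg_inj] at hij
      exact hn (mul_left_cancel₀ hk hij)
    have hw : z (-(k * n 0)) + z (-(k * n 1)) - z (-(k * n 2)) - z (-(k * n 3)) ≠ 0 := by
      simpa using four_pows_ne hp hp4 hζ (fun i : Fin 4 => -(k * n i)) hninj
    have hexp : (z (-(k * n 0)) + z (-(k * n 1)) - z (-(k * n 2)) - z (-(k * n 3))) * S k = 0 := by
      have expand : (z (-(k * n 0)) + z (-(k * n 1)) - z (-(k * n 2)) - z (-(k * n 3))) * S k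
          = ∑ t : ZMod p, (z (k * t) * r (n 0 + t) + z (k * t) * r (n 1 + t)
            - z (k * t) * r (n 2 + t) - z (k * t) * r (n 3 + t)) := by
        rw [Finset.sum_sub_distrib, Finset.sum_sub_distrib, Finset.sum_add_distrib,
          hpart k 0, hpart k 1, hpart k 2, hpart k 3]
        ring
      rw [expand, ← hT]
      apply Finset.sum_congr rfl; intros; ring
    exact (mul_eq_zero.mp hexp).resolve_left hw
  have hfin : ∀ j : ZMod p, (p : ℂ) * r j = S 0 := by
    intro j
    have h1 : ∑ k : ZMod p, z (-(k * j)) * S k = S 0 := by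
      rw [Finset.sum_eq_single 0]
      · simp [hz0]
      · intro k _ hk; rw [hS k hk, mul_zero]
      · intro h; exact absurd (Finset.mem_univ 0) h
    have h2 : ∑ k : ZMod p, z (-(k * j)) * S k = (p : ℂ) * r j := by
      have hterm : ∀ k : ZMod p, z (-(k * j)) * S k = ∑ m : ZMod p, z (k * (m - j)) * r m := by
        intro k; rw [hSdef, Finset.mul_sum]; apply Finset.sum_congr rfl; intro m _
        rw [← mul_assoc, ← hzadd]; ring_nf
      rw [Finset.sum_congr rfl (fun k _ => hterm k), Finset.sum_comm]
      have inner : ∀ m : ZMod p,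
          ∑ k : ZMod p, z (k * (m - j)) * r m = (if m = j then (p : ℂ) * r m else 0) := by
        intro m
        rw [← Finset.sum_mul]
        by_cases hmj : m = j
        · subst hmj; rw [if_pos rfl]
          have hcst : ∑ k : ZMod p, z (k * (m - m)) = (p : ℂ) := by
            simp [sub_self, hz0, Finset.sum_const, ZMod.card, nsmul_eq_mul]
          rw [hcst]
        · rw [if_neg hmj]
          have hzero : ∑ k : ZMod p, z (k * (m - j)) = 0 := by
            have ho := orth (m - j) (sub_ne_zero.mpr hmj)
            rw [← ho]; apply Finset.sum_congr rfl; intros; ring_nf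
          rw [hzero, zero_mul]
      rw [Finset.sum_congr rfl (fun m _ => inner m)]
      simp
    rw [← h2, h1]
  have hpne : (p : ℂ) ≠ 0 := Nat.cast_ne_zero.mpr hp.ne_zero
  have := (hfin 1).trans (hfin 0).symm
  exact mul_left_cancel₀ hpne this



/-- If α has degree 5 or 7 over ℚ, then no four distinct conjugates of α
satisfy α₁ + α₂ = α₃ + α₄. -/
theorem stmt_11 (α : ℂ) (hα : IsAlgebraic ℚ α)
    (hdeg : (minpoly ℚ α).natDegree = 5 ∨ (minpoly ℚ α).natDegree = 7) :
    ¬ ∃ a : Fin 4 → ℂ, Function.Injective a ∧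
      (∀ i, aeval (a i) (minpoly ℚ α) = 0) ∧
      a 0 + a 1 = a 2 + a 3 := by
  rintro ⟨a, hainj, haroot, hsum⟩
  set f := minpoly ℚ α with hfdef
  have hint : IsIntegral ℚ α := hα.isIntegral
  have hirr : Irreducible f := minpoly.irreducible hint
  have hp : f.natDegree.Prime := by rcases hdeg with h | h <;> rw [h] <;> norm_num
  set p := f.natDegree with hpdef
  have hp4 : 4 < p := by rcases hdeg with h | h <;> omega
  have hsep : f.Separable := hirr.separable
  haveI : Fact p.Prime := ⟨hp⟩
  haveI : NeZero p := ⟨hp.ne_zero⟩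
  haveI : Fact (1 < p) := ⟨hp.one_lt⟩
  set L := f.SplittingField with hLdef
  have hsplitL : (f.map (algebraMap ℚ L)).Splits := SplittingField.splits f
  have hsplitC : (f.map (algebraMap ℚ ℂ)).Splits := IsAlgClosed.splits _
  have hfne : f ≠ 0 := minpoly.ne_zero hint
  have hdvd : p ∣ Fintype.card f.Gal := by
    have := Polynomial.Gal.prime_degree_dvd_card hirr hp; rwa [Nat.card_eq_fintype_card] at this
  obtain ⟨σ, hσ⟩ := exists_prime_orderOf_dvd_card p hdvd
  have hcardL : Fintype.card (f.rootSet L) = p := card_rootSet_eq_natDegree hsep hsplitL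
  have hcardC : Fintype.card (f.rootSet ℂ) = p := card_rootSet_eq_natDegree hsep hsplitC
  -- any Galois element maps roots to roots
  have hmaps : ∀ (τ : f.Gal) (x : L), x ∈ f.rootSet L → τ x ∈ f.rootSet L := by
    intro τ x hx
    rw [mem_rootSet] at hx ⊢
    refine ⟨hfne, ?_⟩
    have h2 := aeval_algHom_apply (AlgHomClass.toAlgHom τ) x f
    simp only [AlgHom.coe_coe] at h2
    exact h2.trans (by rw [hx.2, map_zero])
  -- a root moved by σ
  have hexist : ∃ x0 ∈ f.rootSet L, σ x0 ≠ x0 := by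
    by_contra hcon
    push_neg at hcon
    have hσ1 : σ = 1 := by
      have hadj : Algebra.adjoin ℚ (f.rootSet L) = ⊤ := SplittingField.adjoin_rootSet f
      have hle : (⊤ : Subalgebra ℚ L) ≤ AlgHom.equalizer σ.toAlgHom (AlgHom.id ℚ L) := by
        rw [← hadj]
        apply Algebra.adjoin_le
        intro x hx
        exact (AlgHom.mem_equalizer _ _ x).mpr (hcon x hx)
      apply AlgEquiv.ext
      intro x
      exact (AlgHom.mem_equalizer _ _ x).mp (hle (Algebra.mem_top))
    rw [hσ1, orderOf_one] at hσ
    omega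
  obtain ⟨x0, hx0mem, hx0⟩ := hexist
  -- power bookkeeping
  have hpow : ∀ (i j : ZMod p) (x : L), (σ ^ (i + j).val) x = (σ ^ i.val) ((σ ^ j.val) x) := by
    intro i j x
    have hmo := pow_mod_orderOf σ (i.val + j.val)
    rw [hσ] at hmo
    have h : σ ^ (i + j).val = σ ^ i.val * σ ^ j.val := by
      rw [ZMod.val_add, hmo, pow_add]
    rw [h, (show ∀ (a b : f.Gal) (z : L), (a * b) z = a (b z) from fun _ _ _ => rfl)]
  have key : ∀ (m : ZMod p) (y : L), m ≠ 0 → (σ ^ m.val) y = y → σ y = y := by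
    intro m y hm hfix
    have hit : ∀ t : ℕ, ((σ ^ m.val) ^ t) y = y := by
      intro t
      induction t with
      | zero => rw [pow_zero]; rfl
      | succ t ih => rw [pow_succ', (show ∀ (a b : f.Gal) (z : L), (a * b) z = a (b z) from fun _ _ _ => rfl), ih, hfix]
    have h1 : (σ ^ (m.val * m⁻¹.val)) y = y := by rw [pow_mul]; exact hit _
    have hmod : (m.val * m⁻¹.val) % p = 1 := by
      have hcast : ((m.val * m⁻¹.val : ℕ) : ZMod p) = 1 := by
        rw [Nat.cast_mul]
        have e1 : ((m.val : ℕ) : ZMod p) = m := ZMod.natCast_rightInverse m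
        have e2 : ((m⁻¹.val : ℕ) : ZMod p) = m⁻¹ := ZMod.natCast_rightInverse m⁻¹
        rw [e1, e2]
        exact mul_inv_cancel₀ hm
      have := (ZMod.natCast_eq_natCast_iff _ _ _).mp (hcast.trans (Nat.cast_one).symm)
      simpa [Nat.ModEq, Nat.mod_eq_of_lt hp.one_lt] using this
    have hmo := pow_mod_orderOf σ (m.val * m⁻¹.val)
    rw [hσ, hmod, pow_one] at hmo
    rwa [← hmo] at h1
  have hinj : Function.Injective (fun j : ZMod p => (σ ^ j.val) x0) := by
    intro i j hij
    by_contra hne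
    have hm : i - j ≠ 0 := sub_ne_zero.mpr hne
    have h1 : (σ ^ (i - j).val) ((σ ^ j.val) x0) = (σ ^ j.val) x0 := by
      rw [← hpow, sub_add_cancel]
      exact hij
    have h2 := key _ _ hm h1
    have h3 : (σ ^ j.val) (σ x0) = (σ ^ j.val) x0 := by
      rw [← (show ∀ (a b : f.Gal) (z : L), (a * b) z = a (b z) from fun _ _ _ => rfl), ← pow_succ, pow_succ', (show ∀ (a b : f.Gal) (z : L), (a * b) z = a (b z) from fun _ _ _ => rfl), h2]
    exact hx0 ((σ ^ j.val).injective h3)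
  set g : ZMod p → f.rootSet L := fun j => ⟨(σ ^ j.val) x0, hmaps (σ ^ j.val) x0 hx0mem⟩
    with hgdef
  have hginj : Function.Injective g := fun i j hij => hinj (congrArg Subtype.val hij)
  have hgbij : Function.Bijective g := by
    rw [Fintype.bijective_iff_injective_and_card]
    exact ⟨hginj, by rw [ZMod.card, hcardL]⟩
  set eg := Equiv.ofBijective g hgbij with hegdef
  set φ : L →ₐ[ℚ] ℂ := SplittingField.lift f hsplitC with hφdef
  have hφinj : Function.Injective φ := φ.toRingHom.injective
  set ψ : f.rootSet L → f.rootSet ℂ := fun x => ⟨φ x.1, by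
    rw [mem_rootSet]
    exact ⟨hfne, by rw [aeval_algHom_apply φ x.1 f, (mem_rootSet.mp x.2).2, map_zero]⟩⟩
    with hψdef
  have hψinj : Function.Injective ψ := fun x y hxy =>
    Subtype.ext (hφinj (congrArg Subtype.val hxy))
  have hψbij : Function.Bijective ψ := by
    rw [Fintype.bijective_iff_injective_and_card]
    exact ⟨hψinj, by rw [hcardL, hcardC]⟩
  set eψ := Equiv.ofBijective ψ hψbij with heψdef
  have hamem : ∀ i, a i ∈ f.rootSet ℂ := fun i => mem_rootSet.mpr ⟨hfne, haroot i⟩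
  set b : Fin 4 → f.rootSet L := fun i => eψ.symm ⟨a i, hamem i⟩ with hbdef
  have hb : ∀ i, φ (b i).1 = a i := by
    intro i
    exact congrArg Subtype.val (eψ.apply_symm_apply ⟨a i, hamem i⟩)
  have hbinj : Function.Injective b := by
    intro i j hij
    apply hainj
    rw [← hb i, ← hb j, hij]
  have hbsum : ((b 0).1 + (b 1).1 : L) = (b 2).1 + (b 3).1 := by
    apply hφinj
    rw [map_add, map_add, hb 0, hb 1, hb 2, hb 3]
    exact hsum
  set n : Fin 4 → ZMod p := fun i => eg.symm (b i) with hndef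
  have hninj : Function.Injective n := fun i j hij => hbinj (by
    have := congrArg eg hij
    rwa [eg.apply_symm_apply, eg.apply_symm_apply] at this)
  have hgn : ∀ i, (σ ^ (n i).val) x0 = (b i).1 := by
    intro i
    exact congrArg Subtype.val (eg.apply_symm_apply (b i))
  set r : ZMod p → ℂ := fun j => φ ((σ ^ j.val) x0) with hrdef
  have hr : ∀ t : ZMod p, r (n 0 + t) + r (n 1 + t) = r (n 2 + t) + r (n 3 + t) := by
    intro t
    have hri : ∀ i : Fin 4, r (n i + t) = φ ((σ ^ t.val) ((b i).1)) := by
      intro i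
      show φ ((σ ^ (n i + t).val) x0) = _
      rw [add_comm (n i) t, hpow t (n i) x0, hgn i]
    rw [hri 0, hri 1, hri 2, hri 3, ← map_add φ, ← map_add φ,
      ← map_add (σ ^ t.val), ← map_add (σ ^ t.val), hbsum]
  obtain ⟨ζ, hζ⟩ : ∃ ζ : ℂ, IsPrimitiveRoot ζ p :=
    ⟨_, Complex.isPrimitiveRoot_exp p hp.ne_zero⟩
  have hr10 := core hp hp4 hζ r n hninj hr
  have hfinal : φ (σ x0) = φ x0 := by
    have e1 : r 1 = φ (σ x0) := by
      show φ ((σ ^ (1 : ZMod p).val) x0) = _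
      rw [ZMod.val_one p, pow_one]
    have e0 : r 0 = φ x0 := by
      show φ ((σ ^ (0 : ZMod p).val) x0) = _
      rw [ZMod.val_zero, pow_zero]
      rfl
    rw [← e1, ← e0]
    exact hr10
  exact hx0 (hφinj hfinal)
end

section
/- Let α be an algebraic number of degree 6 over ℚ with tr(α) = 0. If four distinct conjugates of α satisfy α₁ + α₂ = α₃ + α₄ =: β, then either β = 0, or β is an algebraic number of degree 3 over ℚ with trace 0. -/
open Polynomial Finset

private lemma even_card_of_invol {L : Type*} [DecidableEq L] :
    ∀ (n : ℕ) (s : Finset L) (f : L → L), s.card = n →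
    (∀ x ∈ s, f x ∈ s) → (∀ x ∈ s, f (f x) = x) → (∀ x ∈ s, f x ≠ x) → Even s.card := by
  intro n
  induction n using Nat.strong_induction_on with
  | _ n ih =>
    intro s f hcard hmem hinv hne
    rcases s.eq_empty_or_nonempty with rfl | ⟨x, hx⟩
    · simp
    · have hfx : f x ∈ s := hmem x hx
      have hfxx : f x ≠ x := hne x hx
      set t := (s.erase x).erase (f x) with ht
      have hts : ∀ y ∈ t, y ∈ s := fun y hy =>
        Finset.mem_of_mem_erase (Finset.mem_of_mem_erase hy)
      have hmt : ∀ y ∈ t, y ≠ x ∧ y ≠ f x := by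
        intro y hy
        exact ⟨(Finset.mem_erase.1 (Finset.mem_of_mem_erase hy)).1, (Finset.mem_erase.1 hy).1⟩
      have htcard : t.card = n - 2 := by
        rw [ht, Finset.card_erase_of_mem (Finset.mem_erase.2 ⟨hfxx, hfx⟩),
          Finset.card_erase_of_mem hx, hcard]
        omega
      have hn2 : 2 ≤ n := by
        have h2 : ({x, f x} : Finset L) ⊆ s := by
          intro y hy
          rcases Finset.mem_insert.1 hy with rfl | hy
          · exact hx
          · rwa [Finset.mem_singleton.1 hy]
        have := Finset.card_le_card h2
        rwa [Finset.card_insert_of_notMem (by simp [Ne.symm hfxx]), Finset.card_singleton,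
          hcard] at this
      have h1 : ∀ y ∈ t, f y ∈ t := by
        intro y hy
        have hys := hts y hy
        obtain ⟨hyx, hyfx⟩ := hmt y hy
        refine Finset.mem_erase.2 ⟨?_, Finset.mem_erase.2 ⟨?_, hmem y hys⟩⟩
        · intro h; apply hyx; rw [← hinv y hys, h, hinv x hx]
        · intro h; apply hyfx; rw [← hinv y hys, h]
      have heven : Even t.card :=
        ih (n - 2) (by omega) t f htcard (fun y hy => h1 y hy)
          (fun y hy => hinv y (hts y hy)) (fun y hy => hne y (hts y hy))
      rw [htcard] at heven
      rw [hcard]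
      obtain ⟨k, hk⟩ := heven
      exact ⟨k + 1, by omega⟩

private lemma combinatorial_core {L : Type*} [Field L] [CharZero L] [DecidableEq L]
    (R Rb : Finset L) (β : L)
    (hR6 : R.card = 6) (hRsum : ∑ r ∈ R, r = 0)
    (hβRb : β ∈ Rb)
    (b : Fin 4 → L) (hbinj : Function.Injective b) (hbR : ∀ i, b i ∈ R)
    (hb01 : b 0 + b 1 = β) (hb23 : b 2 + b 3 = β)
    (hconj : ∀ x ∈ Rb, ∃ σ : L ≃+* L, σ β = x ∧ (∀ r, r ∈ R ↔ σ r ∈ R) ∧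
      (∀ y, y ∈ Rb ↔ σ y ∈ Rb))
    (htrans : ∀ r ∈ R, ∃ σ : L ≃+* L, σ (b 0) = r ∧ (∀ r', r' ∈ R ↔ σ r' ∈ R) ∧
      (∀ y, y ∈ Rb ↔ σ y ∈ Rb)) :
    β = 0 ∨ (Rb.card = 3 ∧ ∑ x ∈ Rb, x = 0) := by
  classical
  set S : L → Finset L := fun x => R.filter (fun r => x - r ∈ R ∧ x - r ≠ r) with hS
  have hSmem : ∀ x r, r ∈ S x ↔ (r ∈ R ∧ x - r ∈ R ∧ x - r ≠ r) := by
    intro x r; simp [hS]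
  have hSsub : ∀ x, S x ⊆ R := fun x => filter_subset _ _
  have hSflip : ∀ x r, r ∈ S x → x - r ∈ S x := by
    intro x r hr
    rw [hSmem] at hr ⊢
    refine ⟨hr.2.1, ?_, ?_⟩
    · rw [show x - (x - r) = r by ring]; exact hr.1
    · rw [show x - (x - r) = r by ring]; exact fun h => hr.2.2 h.symm
  have hSsum : ∀ x, (∑ r ∈ S x, r) + (∑ r ∈ S x, r) = (S x).card • x := by
    intro x
    have h1 : ∑ r ∈ S x, (x - r) = ∑ r ∈ S x, r := by
      apply Finset.sum_nbij' (i := fun r => x - r) (j := fun r => x - r)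
      · exact fun r hr => hSflip x r hr
      · exact fun r hr => hSflip x r hr
      · intro r _; ring
      · intro r _; ring
      · intro r _; rfl
    calc (∑ r ∈ S x, r) + (∑ r ∈ S x, r) = (∑ r ∈ S x, r) + ∑ r ∈ S x, (x - r) := by
          rw [h1]
      _ = ∑ r ∈ S x, (r + (x - r)) := by rw [Finset.sum_add_distrib]
      _ = ∑ _r ∈ S x, x := by apply Finset.sum_congr rfl; intro r _; ring
      _ = (S x).card • x := by rw [Finset.sum_const]
  -- the four elements are in S β
  have key : ∀ (i j : Fin 4), i ≠ j → b i + b j = β → b i ∈ S β := by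
    intro i j hij hsum
    rw [hSmem]
    have hβi : β - b i = b j := by rw [← hsum]; ring
    exact ⟨hbR i, by rw [hβi]; exact hbR j, by rw [hβi]; exact fun h => hij (hbinj h).symm⟩
  have hbS : ∀ i, b i ∈ S β := by
    intro i
    fin_cases i
    · exact key 0 1 (by decide) hb01
    · exact key 1 0 (by decide) (by rw [← hb01]; ring)
    · exact key 2 3 (by decide) hb23
    · exact key 3 2 (by decide) (by rw [← hb23]; ring)
  have hb4card : ({b 0, b 1, b 2, b 3} : Finset L).card = 4 := by
    rw [Finset.card_insert_of_notMem (by simp [hbinj.eq_iff]),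
      Finset.card_insert_of_notMem (by simp [hbinj.eq_iff]),
      Finset.card_insert_of_notMem (by simp [hbinj.eq_iff]), Finset.card_singleton]
  have h4le : 4 ≤ (S β).card := by
    rw [← hb4card]
    apply Finset.card_le_card
    intro y hy
    simp only [Finset.mem_insert, Finset.mem_singleton] at hy
    rcases hy with rfl | rfl | rfl | rfl
    exacts [hbS 0, hbS 1, hbS 2, hbS 3]
  have hle6 : (S β).card ≤ 6 := hR6 ▸ Finset.card_le_card (hSsub β)
  have heven : Even (S β).card := by
    apply even_card_of_invol (S β).card (S β) (fun r => β - r) rfl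
    · exact fun r hr => hSflip β r hr
    · intro r _; ring
    · intro r hr; exact fun h => ((hSmem β r).1 hr).2.2 h
  have h46 : (S β).card = 4 ∨ (S β).card = 6 := by
    obtain ⟨k, hk⟩ := heven; omega
  rcases h46 with hn4 | hn6
  swap
  · -- S β = R, so 6 β = 0
    left
    have hSR : S β = R := Finset.eq_of_subset_of_card_le (hSsub β) (by omega)
    have := hSsum β
    rw [hSR, hRsum, hR6] at this
    have h6 : (6 : ℕ) • β = 0 := this.symm.trans (by ring)
    simpa using h6
  -- main case: #(S β) = 4
  have hSimg : ∀ (σ : L ≃+* L), (∀ r, r ∈ R ↔ σ r ∈ R) → ∀ x, S (σ x) = (S x).image σ := by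
    intro σ hσ x
    ext y
    simp only [Finset.mem_image, hSmem]
    constructor
    · rintro ⟨hyR, hR2, hne2⟩
      refine ⟨σ.symm y, ⟨?_, ?_, ?_⟩, σ.apply_symm_apply y⟩
      · rw [hσ, σ.apply_symm_apply]; exact hyR
      · rw [hσ]
        rw [show σ (x - σ.symm y) = σ x - y by rw [map_sub, σ.apply_symm_apply]]
        exact hR2
      · intro h
        apply hne2
        have := congrArg σ h
        rw [map_sub, σ.apply_symm_apply] at this
        rw [this]
    · rintro ⟨r, ⟨hrR, hr2, hrne⟩, rfl⟩
      refine ⟨(hσ r).1 hrR, ?_, ?_⟩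
      · rw [show σ x - σ r = σ (x - r) by rw [map_sub]]
        exact (hσ _).1 hr2
      · rw [show σ x - σ r = σ (x - r) by rw [map_sub]]
        exact fun h => hrne (σ.injective h)
  have hn4' : ∀ x ∈ Rb, (S x).card = 4 := by
    intro x hx
    obtain ⟨σ, hσβ, hσR, _⟩ := hconj x hx
    rw [← hσβ, hSimg σ hσR, Finset.card_image_of_injective _ σ.injective, hn4]
  have hsum2 : ∀ x ∈ Rb, ∑ r ∈ S x, r = x + x := by
    intro x hx
    have h := hSsum x
    rw [hn4' x hx] at h
    have h2 : (2 : L) * (∑ r ∈ S x, r) = 2 * (x + x) := by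
      rw [two_mul, two_mul, h, nsmul_eq_mul]
      push_cast
      ring
    exact mul_left_cancel₀ two_ne_zero h2
  -- double counting
  have hfiltSx : ∀ x, R.filter (fun r => r ∈ S x) = S x := by
    intro x
    rw [Finset.filter_mem_eq_inter, Finset.inter_eq_right]
    exact hSsub x
  have hdc : ∑ x ∈ Rb, (S x).card = ∑ r ∈ R, (Rb.filter (fun x => r ∈ S x)).card := by
    have h1 : ∀ x, (S x).card = ∑ r ∈ R, if r ∈ S x then 1 else 0 := by
      intro x
      conv_rhs => rw [← Finset.sum_filter]
      rw [hfiltSx x, Finset.card_eq_sum_ones]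
    have h2 : ∀ r, (Rb.filter (fun x => r ∈ S x)).card = ∑ x ∈ Rb, if r ∈ S x then 1 else 0 := by
      intro r
      rw [Finset.card_eq_sum_ones, Finset.sum_filter]
    rw [Finset.sum_congr rfl (fun x _ => h1 x), Finset.sum_comm,
      Finset.sum_congr rfl (fun r _ => (h2 r).symm)]
  have hdc2 : ∑ x ∈ Rb, (∑ r ∈ S x, r)
      = ∑ r ∈ R, ((Rb.filter (fun x => r ∈ S x)).card • r) := by
    have h1 : ∀ x, ∑ r ∈ S x, r = ∑ r ∈ R, if r ∈ S x then r else 0 := by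
      intro x
      conv_rhs => rw [← Finset.sum_filter]
      rw [hfiltSx x]
    have h2 : ∀ r : L, ((Rb.filter (fun x => r ∈ S x)).card • r)
        = ∑ x ∈ Rb, if r ∈ S x then r else 0 := by
      intro r
      rw [← Finset.sum_filter, Finset.sum_const]
    rw [Finset.sum_congr rfl (fun x _ => h1 x), Finset.sum_comm,
      Finset.sum_congr rfl (fun r _ => (h2 r).symm)]
  -- c is constant on R
  have hc_const : ∀ r ∈ R, (Rb.filter (fun x => r ∈ S x)).card
      = (Rb.filter (fun x => b 0 ∈ S x)).card := by
    intro r hr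
    obtain ⟨σ, hσb, hσR, hσRb⟩ := htrans r hr
    have himg : Rb.filter (fun x => r ∈ S x) = (Rb.filter (fun x => b 0 ∈ S x)).image σ := by
      ext y
      simp only [Finset.mem_image, Finset.mem_filter]
      constructor
      · rintro ⟨hy, hrS⟩
        refine ⟨σ.symm y, ⟨(hσRb _).2 (by rw [σ.apply_symm_apply]; exact hy), ?_⟩,
          σ.apply_symm_apply y⟩
        have h3 : S y = (S (σ.symm y)).image σ := by
          rw [← hSimg σ hσR, σ.apply_symm_apply]
        rw [h3, ← hσb] at hrS
        obtain ⟨z, hz, hzz⟩ := Finset.mem_image.1 hrS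
        rwa [← σ.injective hzz]
      · rintro ⟨x, ⟨hx, hbS'⟩, rfl⟩
        refine ⟨(hσRb _).1 hx, ?_⟩
        rw [hSimg σ hσR x, ← hσb]
        exact Finset.mem_image_of_mem σ hbS'
    rw [himg, Finset.card_image_of_injective _ σ.injective]
  set t := (Rb.filter (fun x => b 0 ∈ S x)).card with hts
  set d := Rb.card with hds
  have h4d : 4 * d = 6 * t := by
    have h1 : ∑ x ∈ Rb, (S x).card = 4 * d := by
      rw [Finset.sum_congr rfl (fun x hx => hn4' x hx), Finset.sum_const, smul_eq_mul, mul_comm]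
    have h2 : ∑ r ∈ R, (Rb.filter (fun x => r ∈ S x)).card = 6 * t := by
      rw [Finset.sum_congr rfl (fun r hr => hc_const r hr), Finset.sum_const, smul_eq_mul, hR6]
    rw [← h1, ← h2, hdc]
  have ht5 : t ≤ 5 := by
    have h1 : t ≤ (R.erase (b 0)).card := by
      apply Finset.card_le_card_of_injOn (fun x => x - b 0)
      · intro x hx
        obtain ⟨hxRb, hbSx⟩ := Finset.mem_filter.1 hx
        obtain ⟨_, hx2, hx3⟩ := (hSmem x (b 0)).1 hbSx
        exact Finset.mem_erase.2 ⟨hx3, hx2⟩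
      · intro x _ y _ h
        exact sub_left_inj.1 h
    rw [Finset.card_erase_of_mem (hbR 0), hR6] at h1
    omega
  have hd1 : 1 ≤ d := Finset.card_pos.2 ⟨β, hβRb⟩
  have htrace : ∑ x ∈ Rb, x = 0 := by
    have h1 : ∑ x ∈ Rb, (∑ r ∈ S x, r) = (∑ x ∈ Rb, x) + (∑ x ∈ Rb, x) := by
      rw [Finset.sum_congr rfl (fun x hx => hsum2 x hx), Finset.sum_add_distrib]
    have h2 : ∑ r ∈ R, ((Rb.filter (fun x => r ∈ S x)).card • r) = 0 := by
      rw [Finset.sum_congr rfl (fun r hr => by rw [hc_const r hr]), ← Finset.smul_sum, hRsum,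
        smul_zero]
    have h3 : (∑ x ∈ Rb, x) + (∑ x ∈ Rb, x) = 0 := by rw [← h1, hdc2, h2]
    have h4 : (2 : L) * (∑ x ∈ Rb, x) = 0 := by rw [two_mul, h3]
    exact (mul_eq_zero.1 h4).resolve_left two_ne_zero
  have hd36 : d = 3 ∨ d = 6 := by omega
  rcases hd36 with hd3 | hd6
  · exact Or.inr ⟨hd3, htrace⟩
  -- d = 6 case
  by_cases hm2 : -(β + β) ∈ Rb
  · -- β = 0 via pigeonhole on powers of -2
    left
    have hstep : ∀ x ∈ Rb, -(x + x) ∈ Rb := by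
      intro x hx
      obtain ⟨σ, hσβ, _, hσRb⟩ := hconj x hx
      have h : σ (-(β + β)) = -(x + x) := by rw [map_neg, map_add, hσβ]
      rw [← h]
      exact (hσRb _).1 hm2
    have hu : ∀ k : ℕ, ((-2 : L) ^ k) * β ∈ Rb := by
      intro k
      induction k with
      | zero => simpa using hβRb
      | succ k ihk =>
        have h := hstep _ ihk
        rw [show -((-2:L)^k * β + (-2:L)^k * β) = (-2)^(k+1) * β by ring] at h
        exact h
    obtain ⟨i, hi, j, hj, hij, hEq⟩ :=
      Finset.exists_ne_map_eq_of_card_lt_of_maps_to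
        (t := Rb) (s := Finset.range 7) (by rw [Finset.card_range]; omega)
        (fun k _ => hu k)
    by_contra hβ0
    have hpow : ((-2 : L)) ^ i = (-2) ^ j := mul_right_cancel₀ hβ0 hEq
    have hpowQ : ((-2 : ℚ)) ^ i = (-2) ^ j := by
      have : (((-2 : ℚ) ^ i : ℚ) : L) = (((-2 : ℚ) ^ j : ℚ) : L) := by push_cast; exact_mod_cast hpow
      exact_mod_cast this
    have habs : (2 : ℚ) ^ i = 2 ^ j := by
      have := congrArg abs hpowQ
      simpa [abs_pow] using this
    have : i = j := Nat.pow_right_injective (le_refl 2) (by exact_mod_cast habs : (2:ℕ)^i = 2^j)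
    exact hij this
  · -- counting contradiction
    exfalso
    have hnm2 : ∀ x ∈ Rb, -(x + x) ∉ Rb := by
      intro x hx hcon
      obtain ⟨σ, hσβ, _, hσRb⟩ := hconj x hx
      apply hm2
      have h : σ (-(β + β)) = -(x + x) := by rw [map_neg, map_add, hσβ]
      exact (hσRb _).2 (h ▸ hcon)
    set T : L → Finset (L × L) :=
      fun y => (R ×ˢ R).filter (fun p => p.1 ≠ p.2 ∧ p.1 + p.2 = y) with hT
    have hTmem : ∀ y p, p ∈ T y ↔ (p.1 ∈ R ∧ p.2 ∈ R ∧ p.1 ≠ p.2 ∧ p.1 + p.2 = y) := by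
      intro y p
      simp [hT, Finset.mem_filter, Finset.mem_product, and_assoc]
    have hTsub : ∀ y, T y ⊆ R.offDiag := by
      intro y p hp
      obtain ⟨h1, h2, h3, _⟩ := (hTmem y p).1 hp
      exact Finset.mem_offDiag.2 ⟨h1, h2, h3⟩
    have hTdisj : ∀ y z : L, y ≠ z → Disjoint (T y) (T z) := by
      intro y z hyz
      rw [Finset.disjoint_left]
      intro p hp hq
      exact hyz (((hTmem y p).1 hp).2.2.2.symm.trans ((hTmem z p).1 hq).2.2.2)
    have hTcard : ∀ x ∈ Rb, (T x).card = 4 := by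
      intro x hx
      rw [← hn4' x hx]
      symm
      apply Finset.card_bij (fun r _ => (r, x - r))
      · intro r hr
        obtain ⟨h1, h2, h3⟩ := (hSmem x r).1 hr
        exact (hTmem x _).2 ⟨h1, h2, Ne.symm h3, by ring⟩
      · intro r _ q _ h
        exact (Prod.ext_iff.1 h).1
      · intro p hp
        obtain ⟨h1, h2, h3, h4⟩ := (hTmem x p).1 hp
        refine ⟨p.1, (hSmem x p.1).2 ⟨h1, ?_, ?_⟩, ?_⟩
        · rw [show x - p.1 = p.2 by rw [← h4]; ring]; exact h2
        · rw [show x - p.1 = p.2 by rw [← h4]; ring]; exact fun h => h3 h.symm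
        · have : x - p.1 = p.2 := by rw [← h4]; ring
          rw [this]
    have hTtwo : ∀ x ∈ Rb, 2 ≤ (T (-(x + x))).card := by
      intro x hx
      have hCcard : (R \ S x).card = 2 := by
        rw [Finset.card_sdiff_of_subset (hSsub x), hR6, hn4' x hx]
      obtain ⟨u, v, huv, hCuv⟩ := Finset.card_eq_two.1 hCcard
      have hCsum : u + v = -(x + x) := by
        have hsd := Finset.sum_sdiff_eq_sub (f := fun r => r) (hSsub x)
        rw [hCuv, Finset.sum_pair huv, hRsum, hsum2 x hx] at hsd
        rw [hsd]; ring
      have huR : u ∈ R := by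
        have : u ∈ R \ S x := by rw [hCuv]; exact Finset.mem_insert_self u {v}
        exact (Finset.mem_sdiff.1 this).1
      have hvR : v ∈ R := by
        have : v ∈ R \ S x := by rw [hCuv]; exact Finset.mem_insert_of_mem (Finset.mem_singleton_self v)
        exact (Finset.mem_sdiff.1 this).1
      have hsub2 : ({(u, v), (v, u)} : Finset (L × L)) ⊆ T (-(x + x)) := by
        intro p hp
        rcases Finset.mem_insert.1 hp with rfl | hp
        · exact (hTmem _ _).2 ⟨huR, hvR, huv, hCsum⟩
        · rw [Finset.mem_singleton.1 hp]
          exact (hTmem _ _).2 ⟨hvR, huR, huv.symm, by rw [← hCsum]; ring⟩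
      have h2c : ({(u, v), (v, u)} : Finset (L × L)).card = 2 := by
        rw [Finset.card_insert_of_notMem (by simp [Prod.ext_iff]; exact fun h _ => huv h),
          Finset.card_singleton]
      rw [← h2c]
      exact Finset.card_le_card hsub2
    set Q2 := Rb.image (fun x => -(x + x)) with hQ2
    have hQ2card : Q2.card = 6 := by
      rw [hQ2, Finset.card_image_of_injective _ (fun x y h => by
        have : (2:L) * x = 2 * y := by
          have := neg_injective h
          rw [two_mul, two_mul]; exact this
        exact mul_left_cancel₀ two_ne_zero this), ← hds, hd6]
    have hdisjQ : Disjoint Rb Q2 := by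
      rw [Finset.disjoint_right]
      intro y hy hyRb
      obtain ⟨x, hx, rfl⟩ := Finset.mem_image.1 hy
      exact hnm2 x hx hyRb
    have hsumRb : ∑ x ∈ Rb, (T x).card = 24 := by
      rw [Finset.sum_congr rfl (fun x hx => hTcard x hx), Finset.sum_const, smul_eq_mul, ← hds,
        hd6]
    have hsumQ2 : 12 ≤ ∑ y ∈ Q2, (T y).card := by
      have := Finset.card_nsmul_le_sum Q2 (fun y => (T y).card) 2 (by
        intro y hy
        obtain ⟨x, hx, rfl⟩ := Finset.mem_image.1 hy
        exact hTtwo x hx)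
      rwa [hQ2card, smul_eq_mul] at this
    have hunion : ∑ y ∈ Rb ∪ Q2, (T y).card ≤ 30 := by
      rw [← Finset.card_biUnion (fun y _ z _ h => hTdisj y z h)]
      calc ((Rb ∪ Q2).biUnion T).card ≤ R.offDiag.card :=
            Finset.card_le_card (Finset.biUnion_subset.2 fun y _ => hTsub y)
        _ = 30 := by rw [Finset.offDiag_card, hR6]
    have hsplit : ∑ y ∈ Rb ∪ Q2, (T y).card = (∑ x ∈ Rb, (T x).card) + ∑ y ∈ Q2, (T y).card :=
      Finset.sum_union hdisjQ
    omega
/-- For α of degree 6 over ℚ with trace 0: if four distinct conjugates satisfy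
α₁ + α₂ = α₃ + α₄ =: β, then β = 0, or β has degree 3 over ℚ and trace 0. -/
theorem stmt_12 (α : ℂ) (hα : IsAlgebraic ℚ α)
    (hdeg : (minpoly ℚ α).natDegree = 6)
    (htr : ((minpoly ℚ α).map (algebraMap ℚ ℂ)).roots.sum = 0)
    (a : Fin 4 → ℂ) (hinj : Function.Injective a)
    (hroots : ∀ i, aeval (a i) (minpoly ℚ α) = 0)
    (hrel : a 0 + a 1 = a 2 + a 3) :
    a 0 + a 1 = 0 ∨
      ((minpoly ℚ (a 0 + a 1)).natDegree = 3 ∧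
        ((minpoly ℚ (a 0 + a 1)).map (algebraMap ℚ ℂ)).roots.sum = 0) := by
  classical
  set f := minpoly ℚ α with hf
  have hint : IsIntegral ℚ α := hα.isIntegral
  have hf0 : f ≠ 0 := minpoly.ne_zero hint
  have hfmonic : f.Monic := minpoly.monic hint
  have hfirr : Irreducible f := minpoly.irreducible hint
  have hfsplits : (f.map (algebraMap ℚ ℂ)).Splits := IsAlgClosed.splits _
  set K : IntermediateField ℚ ℂ := IntermediateField.adjoin ℚ (f.rootSet ℂ) with hK
  haveI hKsf : IsSplittingField ℚ K f :=
    IntermediateField.adjoin_rootSet_isSplittingField hfsplits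
  haveI : FiniteDimensional ℚ K := IsSplittingField.finiteDimensional K f
  haveI : Normal ℚ K := Normal.of_isSplittingField f
  have haK : ∀ i, a i ∈ K := by
    intro i
    apply IntermediateField.subset_adjoin
    rw [Polynomial.mem_rootSet]
    exact ⟨hf0, hroots i⟩
  set b : Fin 4 → K := fun i => ⟨a i, haK i⟩ with hb
  have hbinj : Function.Injective b := fun i j h => hinj (congrArg Subtype.val h)
  set β : K := b 0 + b 1 with hβ
  have hβℂ : (algebraMap K ℂ) β = a 0 + a 1 := rfl
  have hinjKC : Function.Injective (algebraMap K ℂ) := (algebraMap K ℂ).injective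
  have hmin_eq : minpoly ℚ (a 0 + a 1) = minpoly ℚ β := by
    rw [← hβℂ, minpoly.algebraMap_eq hinjKC]
  -- roots of f in K
  set fK := f.map (algebraMap ℚ K) with hfK
  have hfK0 : fK ≠ 0 := Polynomial.map_ne_zero hf0
  have hfKsplits : fK.Splits := by
    exact hKsf.splits
  have hfsep : f.Separable := hfirr.separable
  have hnodupR : fK.roots.Nodup := nodup_roots (hfsep.map)
  set R : Finset K := fK.roots.toFinset with hR
  have hRval : R.val = fK.roots := by
    rw [hR, Multiset.toFinset_val, Multiset.dedup_eq_self.2 hnodupR]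
  have hRcard : R.card = 6 := by
    rw [Finset.card, hRval, hfK, ← Polynomial.Splits.natDegree_eq_card_roots hKsf.splits, natDegree_map, ← hdeg]
  have hmemR : ∀ r : K, r ∈ R ↔ aeval r f = 0 := by
    intro r
    rw [hR, Multiset.mem_toFinset, mem_roots hfK0, IsRoot.def, hfK, eval_map, ← aeval_def]
  have hRsumroots : fK.roots.sum = 0 := by
    apply hinjKC
    have hmm : fK.map (algebraMap K ℂ) = f.map (algebraMap ℚ ℂ) := by
      rw [hfK, Polynomial.map_map, ← IsScalarTower.algebraMap_eq]
    have h1 : (f.map (algebraMap ℚ ℂ)).roots = fK.roots.map (algebraMap K ℂ) := by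
      rw [← hmm, hfKsplits.roots_map _]
    rw [map_zero, map_multiset_sum, ← h1]
    exact htr
  have hRsum : ∑ r ∈ R, r = 0 := by
    have h2 : ∑ r ∈ R, r = R.val.sum := by
      rw [Finset.sum]; rw [Multiset.map_id']
    rw [h2, hRval, hRsumroots]
  -- roots of minpoly β in K
  have hβint : IsIntegral ℚ β := IsIntegral.of_finite ℚ β
  set mβ := minpoly ℚ β with hmβ
  have hmβ0 : mβ ≠ 0 := minpoly.ne_zero hβint
  have hmβirr : Irreducible mβ := minpoly.irreducible hβint
  have hmβsplits : (mβ.map (algebraMap ℚ K)).Splits := Normal.splits inferInstance β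
  set mβK := mβ.map (algebraMap ℚ K) with hmβK
  have hmβK0 : mβK ≠ 0 := Polynomial.map_ne_zero hmβ0
  have hmβKsplits : mβK.Splits := by
    exact hmβsplits
  have hnodupRb : mβK.roots.Nodup := nodup_roots (hmβirr.separable.map)
  set Rb : Finset K := mβK.roots.toFinset with hRb
  have hRbval : Rb.val = mβK.roots := by
    rw [hRb, Multiset.toFinset_val, Multiset.dedup_eq_self.2 hnodupRb]
  have hmemRb : ∀ r : K, r ∈ Rb ↔ aeval r mβ = 0 := by
    intro r
    rw [hRb, Multiset.mem_toFinset, mem_roots hmβK0, IsRoot.def, hmβK, eval_map, ← aeval_def]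
  have hβRb : β ∈ Rb := (hmemRb β).2 (minpoly.aeval ℚ β)
  have hRbcard : Rb.card = mβ.natDegree := by
    rw [Finset.card, hRbval, hmβK, ← Polynomial.Splits.natDegree_eq_card_roots hmβsplits, natDegree_map]
  -- roots of f facts about b i
  have hbroot : ∀ i, aeval (b i) f = 0 := by
    intro i
    apply hinjKC
    have haev : aeval ((algebraMap K ℂ) (b i)) f = (algebraMap K ℂ) (aeval (b i) f) :=
      aeval_algHom_apply (IsScalarTower.toAlgHom ℚ K ℂ) (b i) f
    rw [map_zero, ← haev]
    show aeval (a i) f = 0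
    exact hroots i
  have hbR : ∀ i, b i ∈ R := fun i => (hmemR (b i)).2 (hbroot i)
  have hb23 : b 2 + b 3 = β := by
    apply Subtype.ext
    have : (algebraMap K ℂ) (b 2 + b 3) = a 2 + a 3 := rfl
    show a 2 + a 3 = _
    rw [← hrel]; rfl
  -- Galois automorphism transfer
  have hpres : ∀ σ : K ≃ₐ[ℚ] K, (∀ r : K, r ∈ R ↔ σ r ∈ R) ∧
      (∀ y : K, y ∈ Rb ↔ σ y ∈ Rb) := by
    intro σ
    constructor
    · intro r
      have haev : aeval (σ r) f = σ (aeval r f) := aeval_algHom_apply (σ : K →ₐ[ℚ] K) r f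
      rw [hmemR, hmemR, haev]
      exact (map_eq_zero_iff σ σ.injective).symm
    · intro y
      have haev : aeval (σ y) mβ = σ (aeval y mβ) := aeval_algHom_apply (σ : K →ₐ[ℚ] K) y mβ
      rw [hmemRb, hmemRb, haev]
      exact (map_eq_zero_iff σ σ.injective).symm
  have hconj : ∀ x ∈ Rb, ∃ σ : K ≃+* K, σ β = x ∧ (∀ r : K, r ∈ R ↔ σ r ∈ R) ∧
      (∀ y : K, y ∈ Rb ↔ σ y ∈ Rb) := by
    intro x hx
    obtain ⟨σ, hσ⟩ := minpoly.exists_algEquiv_of_root' (hβint.isAlgebraic) ((hmemRb x).1 hx)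
    exact ⟨σ, hσ, (hpres σ).1, (hpres σ).2⟩
  have htrans : ∀ r ∈ R, ∃ σ : K ≃+* K, σ (b 0) = r ∧ (∀ r' : K, r' ∈ R ↔ σ r' ∈ R) ∧
      (∀ y : K, y ∈ Rb ↔ σ y ∈ Rb) := by
    intro r hr
    have hb0min : minpoly ℚ (b 0) = f :=
      (minpoly.eq_of_irreducible_of_monic hfirr (hbroot 0) hfmonic).symm
    obtain ⟨σ, hσ⟩ := minpoly.exists_algEquiv_of_root'
      ((IsIntegral.of_finite ℚ (b 0)).isAlgebraic)
      (show aeval r (minpoly ℚ (b 0)) = 0 by rw [hb0min]; exact (hmemR r).1 hr)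
    exact ⟨σ, hσ, (hpres σ).1, (hpres σ).2⟩
  -- apply the combinatorial core
  have hmain := combinatorial_core R Rb β hRcard hRsum hβRb b hbinj hbR rfl hb23 hconj htrans
  rcases hmain with h0 | ⟨hcard3, hsum0⟩
  · left
    rw [← hβℂ, h0, map_zero]
  · right
    constructor
    · rw [hmin_eq, ← hRbcard, hcard3]
    · rw [hmin_eq]
      have hmm : mβK.map (algebraMap K ℂ) = mβ.map (algebraMap ℚ ℂ) := by
        rw [hmβK, Polynomial.map_map, ← IsScalarTower.algebraMap_eq]
      have h1 : (mβ.map (algebraMap ℚ ℂ)).roots = mβK.roots.map (algebraMap K ℂ) := by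
        rw [← hmm, hmβKsplits.roots_map _]
      rw [h1, ← map_multiset_sum]
      have h2 : mβK.roots.sum = 0 := by
        have h3 : ∑ x ∈ Rb, x = Rb.val.sum := by rw [Finset.sum]; rw [Multiset.map_id']
        rw [← hRbval, ← h3, hsum0]
      rw [h2, map_zero]
end

section
/- Let a, b, c ∈ ℚ and let p(x) = x⁶ + (2b − 3a)x⁴ + 2c x³ + (3a² + b²)x² + 2c(3a + b)x − a³ − 2a²b − ab² + c². Then p is irreducible over ℚ if and only if a is not the square of a rational number and x³ + bx + c has no rational root. -/
open Polynomial IntermediateField Module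

/-- The polynomial p(x) = x⁶ + (2b−3a)x⁴ + 2c x³ + (3a²+b²)x² + 2c(3a+b)x
− a³ − 2a²b − ab² + c² is irreducible over ℚ iff a is not a square of a
rational and x³ + bx + c has no rational root. -/
theorem stmt_19 (a b c : ℚ) :
    Irreducible ((X : ℚ[X]) ^ 6 + C (2 * b - 3 * a) * X ^ 4 + C (2 * c) * X ^ 3 +
        C (3 * a ^ 2 + b ^ 2) * X ^ 2 + C (2 * c * (3 * a + b)) * X +
        C (-a ^ 3 - 2 * a ^ 2 * b - a * b ^ 2 + c ^ 2)) ↔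
      (¬ ∃ r : ℚ, r ^ 2 = a) ∧ (¬ ∃ r : ℚ, r ^ 3 + b * r + c = 0) := by
  set p : ℚ[X] := X ^ 6 + C (2 * b - 3 * a) * X ^ 4 + C (2 * c) * X ^ 3 +
      C (3 * a ^ 2 + b ^ 2) * X ^ 2 + C (2 * c * (3 * a + b)) * X +
      C (-a ^ 3 - 2 * a ^ 2 * b - a * b ^ 2 + c ^ 2) with hp_def
  have hpmonic : p.Monic := by unfold p; monicity!
  have hpdeg : p.natDegree = 6 := by unfold p; compute_degree!
  constructor
  · intro hirr
    constructor
    · rintro ⟨r, hr⟩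
      have hfac : p = ((X ^ 3 + C (3 * a + b) * X + C c) - C r * (C 3 * X ^ 2 + C (a + b))) *
          ((X ^ 3 + C (3 * a + b) * X + C c) + C r * (C 3 * X ^ 2 + C (a + b))) := by
        rw [hp_def, ← hr]
        simp only [C_add, C_mul, C_sub, C_neg, C_pow, map_ofNat]
        ring
      rcases hirr.isUnit_or_isUnit hfac with h | h
      · refine not_isUnit_of_natDegree_pos _ ?_ h
        have : (X ^ 3 + C (3 * a + b) * X + C c - C r * (C 3 * X ^ 2 + C (a + b)) : ℚ[X]).natDegree = 3 := by
          compute_degree!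
        omega
      · refine not_isUnit_of_natDegree_pos _ ?_ h
        have : (X ^ 3 + C (3 * a + b) * X + C c + C r * (C 3 * X ^ 2 + C (a + b)) : ℚ[X]).natDegree = 3 := by
          compute_degree!
        omega
    · rintro ⟨t, ht⟩
      have hc : c = -t ^ 3 - b * t := by linarith
      have hfac : p = ((X - C t) ^ 2 - C a) *
          ((X ^ 2 + C t * X + C (t ^ 2 + b + a)) ^ 2 - C a * (C 2 * X + C t) ^ 2) := by
        rw [hp_def, hc]
        simp only [C_add, C_mul, C_sub, C_neg, C_pow, map_ofNat]
        ring
      rcases hirr.isUnit_or_isUnit hfac with h | h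
      · refine not_isUnit_of_natDegree_pos _ ?_ h
        have : ((X - C t) ^ 2 - C a : ℚ[X]).natDegree = 2 := by compute_degree!
        omega
      · refine not_isUnit_of_natDegree_pos _ ?_ h
        have : ((X ^ 2 + C t * X + C (t ^ 2 + b + a)) ^ 2 - C a * (C 2 * X + C t) ^ 2 : ℚ[X]).natDegree = 4 := by
          compute_degree!
        omega
  · rintro ⟨hsq, hroot⟩
    -- irreducibility of the quadratic and cubic
    have hQmonic : (X ^ 2 - C a : ℚ[X]).Monic := by monicity!
    have hQdeg : (X ^ 2 - C a : ℚ[X]).natDegree = 2 := by compute_degree!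
    have hQirr : Irreducible (X ^ 2 - C a : ℚ[X]) := by
      rw [hQmonic.irreducible_iff_roots_eq_zero_of_degree_le_three (by omega) (by omega)]
      rw [Multiset.eq_zero_iff_forall_notMem]
      intro r hr
      rw [mem_roots hQmonic.ne_zero] at hr
      refine hsq ⟨r, ?_⟩
      simpa only [IsRoot, eval_sub, eval_pow, eval_X, eval_C, sub_eq_zero] using hr
    have hRmonic : (X ^ 3 + C b * X + C c : ℚ[X]).Monic := by monicity!
    have hRdeg : (X ^ 3 + C b * X + C c : ℚ[X]).natDegree = 3 := by compute_degree!
    have hRirr : Irreducible (X ^ 3 + C b * X + C c : ℚ[X]) := by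
      rw [hRmonic.irreducible_iff_roots_eq_zero_of_degree_le_three (by omega) (by omega)]
      rw [Multiset.eq_zero_iff_forall_notMem]
      intro r hr
      rw [mem_roots hRmonic.ne_zero] at hr
      refine hroot ⟨r, ?_⟩
      simpa only [IsRoot, eval_add, eval_mul, eval_pow, eval_X, eval_C] using hr
    have hcast : ∀ (L : IntermediateField ℚ ℂ) (x : ℂ) (hx : x ∈ L),
        minpoly ℚ (⟨x, hx⟩ : L) = minpoly ℚ x := by
      intro L x hx
      rw [← minpoly.algebraMap_eq (algebraMap L ℂ).injective (⟨x, hx⟩ : L),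
        IntermediateField.algebraMap_apply]
    -- roots in ℂ
    obtain ⟨s, hs0⟩ := Complex.exists_root (f := X ^ 2 - C (a : ℂ))
      (by rw [degree_eq_natDegree (by intro h; simpa using congrArg natDegree h)]
          norm_cast
          have : (X ^ 2 - C (a : ℂ)).natDegree = 2 := by compute_degree!
          omega)
    have hs : s ^ 2 = (a : ℂ) := by
      simpa only [IsRoot, eval_sub, eval_pow, eval_X, eval_C, sub_eq_zero] using hs0
    obtain ⟨β, hb0⟩ := Complex.exists_root (f := X ^ 3 + C (b : ℂ) * X + C (c : ℂ))
      (by rw [degree_eq_natDegree (by intro h; simpa using congrArg (fun q => coeff q 3) h)]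
          norm_cast
          have : (X ^ 3 + C (b : ℂ) * X + C (c : ℂ)).natDegree = 3 := by compute_degree!
          omega)
    have hβ : β ^ 3 + (b : ℂ) * β + (c : ℂ) = 0 := by
      simpa only [IsRoot, eval_add, eval_mul, eval_pow, eval_X, eval_C] using hb0
    -- minpolys
    have hQev : aeval s (X ^ 2 - C a : ℚ[X]) = 0 := by
      simp [hs, eq_ratCast]
    have hRev : aeval β (X ^ 3 + C b * X + C c : ℚ[X]) = 0 := by
      simp only [map_add, map_sub, map_mul, map_pow, aeval_X, aeval_C, eq_ratCast]
      exact hβ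
    have hms : minpoly ℚ s = X ^ 2 - C a :=
      (minpoly.eq_of_irreducible_of_monic hQirr hQev hQmonic).symm
    have hmβ : minpoly ℚ β = X ^ 3 + C b * X + C c :=
      (minpoly.eq_of_irreducible_of_monic hRirr hRev hRmonic).symm
    have hsint : IsIntegral ℚ s := ⟨X ^ 2 - C a, hQmonic, by rwa [← aeval_def]⟩
    have hβint : IsIntegral ℚ β := ⟨X ^ 3 + C b * X + C c, hRmonic, by rwa [← aeval_def]⟩
    -- the key relation : A(θ) = s * B(θ)
    have hA : (s + β) ^ 3 + ((3 * a + b : ℚ) : ℂ) * (s + β) + ((c : ℚ) : ℂ) =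
        s * (3 * (s + β) ^ 2 + ((a + b : ℚ) : ℂ)) := by
      push_cast
      linear_combination hβ - (2 * s + 3 * β) * hs
    -- p vanishes at θ = s + β
    have hev : aeval (s + β) p = 0 := by
      rw [hp_def]
      simp only [map_add, map_sub, map_neg, map_mul, map_pow, aeval_X, aeval_C, eq_ratCast]
      push_cast
      linear_combination (((s+β)^3 + (3*(a:ℂ)+b)*(s+β) + c) + s*(3*(s+β)^2 + ((a:ℂ)+b))) * hβ +
        ((3*(s+β)^2 + ((a:ℂ)+b))^2 -
          (((s+β)^3 + (3*(a:ℂ)+b)*(s+β) + c) + s*(3*(s+β)^2 + ((a:ℂ)+b))) * (2*s+3*β)) * hs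
    have hθint : IsIntegral ℚ (s + β) := ⟨p, hpmonic, by rwa [← aeval_def]⟩
    have hmdvd : minpoly ℚ (s + β) ∣ p := minpoly.dvd ℚ _ hev
    have hmle : (minpoly ℚ (s + β)).natDegree ≤ 6 := by
      rw [← hpdeg]
      exact natDegree_le_of_dvd hmdvd hpmonic.ne_zero
    -- B(θ) ≠ 0
    have hBne : 3 * (s + β) ^ 2 + ((a + b : ℚ) : ℂ) ≠ 0 := by
      intro hB
      have hA0 : (s + β) ^ 3 + ((3 * a + b : ℚ) : ℂ) * (s + β) + ((c : ℚ) : ℂ) = 0 := by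
        rw [hA, hB, mul_zero]
      have key : (s + β) * ((8 * a + 2 * b : ℚ) : ℂ) = -(3 * (c : ℂ)) := by
        push_cast at hA0 hB ⊢
        linear_combination 3 * hA0 - (s + β) * hB
      by_cases hab : 8 * a + 2 * b = 0
      · have hc0 : (c : ℂ) = 0 := by
          rw [hab] at key
          push_cast at key
          linear_combination key / 3
        have : c = 0 := by exact_mod_cast hc0
        exact hroot ⟨0, by simp [this]⟩
      · set t : ℚ := -(3 * c) / (8 * a + 2 * b) with ht_def
        have hθt : s + β = (t : ℂ) := by
          have habC : (8 * (a : ℂ) + 2 * (b : ℂ)) ≠ 0 := by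
            have : ((8 * a + 2 * b : ℚ) : ℂ) ≠ 0 := by exact_mod_cast hab
            push_cast at this
            exact this
          rw [ht_def]
          push_cast
          rw [eq_div_iff habC]
          push_cast at key
          linear_combination key
        haveI : FiniteDimensional ℚ ℚ⟮β⟯ := adjoin.finiteDimensional hβint
        have h3 : finrank ℚ ℚ⟮β⟯ = 3 := by
          rw [adjoin.finrank hβint, hmβ, hRdeg]
        have hsmem : s ∈ ℚ⟮β⟯ := by
          have hseq : s = (t : ℂ) - β := by rw [← hθt]; ring
          rw [hseq]
          refine sub_mem ?_ (mem_adjoin_simple_self ℚ β)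
          rw [show ((t : ℚ) : ℂ) = algebraMap ℚ ℂ t from (eq_ratCast _ t).symm]
          exact IntermediateField.algebraMap_mem _ t
        have hdvd2 : (minpoly ℚ (⟨s, hsmem⟩ : ℚ⟮β⟯)).natDegree ∣ finrank ℚ ℚ⟮β⟯ :=
          minpoly.degree_dvd (IsIntegral.of_finite ℚ _)
        rw [h3, hcast ℚ⟮β⟯ s hsmem, hms, hQdeg] at hdvd2
        omega
    -- s and β lie in ℚ⟮s + β⟯
    haveI : FiniteDimensional ℚ ℚ⟮s + β⟯ := adjoin.finiteDimensional hθint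
    have hθmem : s + β ∈ ℚ⟮s + β⟯ := mem_adjoin_simple_self ℚ (s + β)
    have hsmem : s ∈ ℚ⟮s + β⟯ := by
      have hseq : s = ((s + β) ^ 3 + ((3 * a + b : ℚ) : ℂ) * (s + β) + ((c : ℚ) : ℂ)) /
          (3 * (s + β) ^ 2 + ((a + b : ℚ) : ℂ)) := by
        rw [hA, mul_div_assoc, div_self hBne, mul_one]
      have hq1 : ((3 * a + b : ℚ) : ℂ) ∈ ℚ⟮s + β⟯ := by
        rw [show ((3 * a + b : ℚ) : ℂ) = algebraMap ℚ ℂ (3 * a + b) from (eq_ratCast _ _).symm]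
        exact IntermediateField.algebraMap_mem _ _
      have hq2 : ((c : ℚ) : ℂ) ∈ ℚ⟮s + β⟯ := by
        rw [show ((c : ℚ) : ℂ) = algebraMap ℚ ℂ c from (eq_ratCast _ _).symm]
        exact IntermediateField.algebraMap_mem _ _
      have hq3 : ((a + b : ℚ) : ℂ) ∈ ℚ⟮s + β⟯ := by
        rw [show ((a + b : ℚ) : ℂ) = algebraMap ℚ ℂ (a + b) from (eq_ratCast _ _).symm]
        exact IntermediateField.algebraMap_mem _ _
      have h3m : (3 : ℂ) ∈ ℚ⟮s + β⟯ := by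
        have : (3 : ℂ) = algebraMap ℚ ℂ 3 := by rw [eq_ratCast]; norm_num
        rw [this]
        exact IntermediateField.algebraMap_mem _ _
      have hmem : ((s + β) ^ 3 + ((3 * a + b : ℚ) : ℂ) * (s + β) + ((c : ℚ) : ℂ)) /
          (3 * (s + β) ^ 2 + ((a + b : ℚ) : ℂ)) ∈ ℚ⟮s + β⟯ :=
        div_mem (add_mem (add_mem (pow_mem hθmem 3) (mul_mem hq1 hθmem)) hq2)
          (add_mem (mul_mem h3m (pow_mem hθmem 2)) hq3)
      rwa [← hseq] at hmem
    have hβmem : β ∈ ℚ⟮s + β⟯ := by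
      have h := sub_mem hθmem hsmem
      rwa [show s + β - s = β from by ring] at h
    -- divisibility of degrees
    have hfr : finrank ℚ ℚ⟮s + β⟯ = (minpoly ℚ (s + β)).natDegree :=
      adjoin.finrank hθint
    have hdvd2 : 2 ∣ finrank ℚ ℚ⟮s + β⟯ := by
      have := minpoly.degree_dvd (K := ℚ) (x := (⟨s, hsmem⟩ : ℚ⟮s + β⟯)) (IsIntegral.of_finite ℚ _)
      rwa [hcast ℚ⟮s + β⟯ s hsmem, hms, hQdeg] at this
    have hdvd3 : 3 ∣ finrank ℚ ℚ⟮s + β⟯ := by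
      have := minpoly.degree_dvd (K := ℚ) (x := (⟨β, hβmem⟩ : ℚ⟮s + β⟯)) (IsIntegral.of_finite ℚ _)
      rwa [hcast ℚ⟮s + β⟯ β hβmem, hmβ, hRdeg] at this
    have hmpos : 0 < (minpoly ℚ (s + β)).natDegree := minpoly.natDegree_pos hθint
    have hm6 : (minpoly ℚ (s + β)).natDegree = 6 := by
      rw [hfr] at hdvd2 hdvd3
      omega
    have hpm : p = minpoly ℚ (s + β) := by
      refine eq_of_monic_of_dvd_of_natDegree_le (minpoly.monic hθint) hpmonic hmdvd ?_
      omega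
    rw [hpm]
    exact minpoly.irreducible hθint
end
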